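/- arXiv:1604.06974 — 13 statements merged into one kernel-verified Lean document; each statement's English description precedes it below -/
import Mathlib

section
/- Let d ≥ 2 and let v : Fin d → ℝ satisfy ∑_j v_j = 1 and ∑_j v_j² = d. Then (√(d+1) − 1)/d ≤ −(min_j v_j) ≤ ((d−1)√(d+1) − 1)/d. -/
/-- If `d ≥ 2` and `v : Fin d → ℝ` satisfies `∑ v j = 1` and `∑ (v j)² = d`,
then `(√(d+1) − 1)/d ≤ −(min_j v j) ≤ ((d−1)√(d+1) − 1)/d`. -/
theorem stmt_0 (d : ℕ) (hd : 2 ≤ d) (v : Fin d → ℝ)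
    (hsum : ∑ j, v j = 1) (hsq : ∑ j, v j ^ 2 = d) :
    (Real.sqrt (d + 1) - 1) / d ≤ -(⨅ j, v j) ∧
      -(⨅ j, v j) ≤ (((d : ℝ) - 1) * Real.sqrt (d + 1) - 1) / d := by
  have hd1 : 1 ≤ d := by omega
  have hdR : (2:ℝ) ≤ (d:ℝ) := by exact_mod_cast hd
  have hd0 : (0:ℝ) < d := by linarith
  haveI : Nonempty (Fin d) := ⟨⟨0, by omega⟩⟩
  obtain ⟨j0, hj0⟩ := Finite.exists_min v
  have hmin : (⨅ j, v j) = v j0 :=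
    le_antisymm (ciInf_le (Finite.bddBelow_range v) j0) (le_ciInf hj0)
  set x := v j0 with hx
  have hcastd1 : ((d - 1 : ℕ) : ℝ) = (d:ℝ) - 1 := by
    push_cast [Nat.cast_sub hd1]; ring
  -- mean bound
  have hdx : (d:ℝ) * x ≤ 1 := by
    have h1 : ∑ _j : Fin d, x ≤ ∑ j, v j := Finset.sum_le_sum fun j _ => hj0 j
    rw [hsum, Finset.sum_const, Finset.card_univ, Fintype.card_fin, nsmul_eq_mul] at h1
    exact h1
  have hs : Real.sqrt ((d:ℝ) + 1) ^ 2 = (d:ℝ) + 1 := Real.sq_sqrt (by positivity)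
  have hs0 : 0 ≤ Real.sqrt ((d:ℝ) + 1) := Real.sqrt_nonneg _
  -- bound on each coordinate from sum over erase
  have hbnd : ∀ j : Fin d, v j + ((d:ℝ)-1)*x ≤ 1 := by
    intro j
    have hmem : j ∈ (Finset.univ : Finset (Fin d)) := Finset.mem_univ j
    have he : ∑ i ∈ Finset.univ.erase j, v i + v j = 1 := by
      rw [Finset.sum_erase_add _ _ hmem, hsum]
    have h2 : ∑ _i ∈ Finset.univ.erase j, x ≤ ∑ i ∈ Finset.univ.erase j, v i :=
      Finset.sum_le_sum fun i _ => hj0 i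
    rw [Finset.sum_const, Finset.card_erase_of_mem hmem, Finset.card_univ,
      Fintype.card_fin, nsmul_eq_mul, hcastd1] at h2
    linarith
  -- LOWER bound: (1 - d x)^2 ≥ d + 1
  have hptsum : (0:ℝ) ≤ ∑ j, (v j - x) * (1 - v j - ((d:ℝ)-1)*x) := by
    refine Finset.sum_nonneg fun j _ => mul_nonneg ?_ ?_
    · linarith [hj0 j]
    · linarith [hbnd j]
  have hexp : ∑ j, (v j - x) * (1 - v j - ((d:ℝ)-1)*x)
      = ∑ j, ((-x + ((d:ℝ)-1)*x^2) + (1 + (2-(d:ℝ))*x) * v j - v j ^ 2) :=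
    Finset.sum_congr rfl fun j _ => by ring
  have hval : ∑ j, ((-x + ((d:ℝ)-1)*x^2) + (1 + (2-(d:ℝ))*x) * v j - v j ^ 2)
      = (d:ℝ) * (-x + ((d:ℝ)-1)*x^2) + (1 + (2-(d:ℝ))*x) * 1 - (d:ℝ) := by
    rw [Finset.sum_sub_distrib, Finset.sum_add_distrib, Finset.sum_const,
      ← Finset.mul_sum, hsum, hsq, Finset.card_univ, Fintype.card_fin, nsmul_eq_mul]
  rw [hexp, hval] at hptsum
  have hkey : (d:ℝ) + 1 ≤ (1 - (d:ℝ)*x)^2 := by nlinarith [hptsum, hdR, sq_nonneg x]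
  have hlow : Real.sqrt ((d:ℝ) + 1) ≤ 1 - (d:ℝ)*x := by
    nlinarith [hs, hs0, hdx, hkey]
  -- UPPER bound via Cauchy–Schwarz
  have hmem0 : j0 ∈ (Finset.univ : Finset (Fin d)) := Finset.mem_univ j0
  have hes : ∑ i ∈ Finset.univ.erase j0, v i = 1 - x := by
    have := Finset.sum_erase_add Finset.univ v hmem0
    rw [hsum] at this; linarith
  have hesq : ∑ i ∈ Finset.univ.erase j0, v i ^ 2 = (d:ℝ) - x^2 := by
    have h := Finset.sum_erase_add Finset.univ (fun i => v i ^ 2) hmem0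
    rw [hsq] at h; linarith [h]
  have hcs := sq_sum_le_card_mul_sum_sq (s := Finset.univ.erase j0) (f := v)
  rw [hes, hesq, Finset.card_erase_of_mem hmem0, Finset.card_univ,
    Fintype.card_fin, hcastd1] at hcs
  have hup : ((d:ℝ)*x - 1)^2 ≤ (((d:ℝ)-1) * Real.sqrt ((d:ℝ)+1))^2 := by
    nlinarith [hcs, hs, hdR]
  have hup2 : 1 - ((d:ℝ)-1) * Real.sqrt ((d:ℝ)+1) ≤ (d:ℝ)*x := by
    nlinarith [hup, mul_nonneg (by linarith : (0:ℝ) ≤ (d:ℝ)-1) hs0, hdx]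
  rw [hmin]
  constructor
  · rw [div_le_iff₀ hd0]
    linarith [hlow]
  · rw [le_div_iff₀ hd0]
    linarith [hup2]
end

section
/- Let d ≥ 2 and let v : Fin d → ℝ satisfy ∑_j v_j = 1 and ∑_j v_j² = d. Then: (a) min_j v_j = −(√(d+1) − 1)/d holds if and only if v takes the value ((d−1)√(d+1) + 1)/d at exactly one coordinate and the value (1 − √(d+1))/d at the remaining d−1 coordinates; (b) min_j v_j = −((d−1)√(d+1) − 1)/d holds if and only if v takes the value (√(d+1) + 1)/d at exactly d−1 coordinates and the value (1 − (d−1)√(d+1))/d at the remaining coordinate. -/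
open Finset

theorem iInf_eq_min_of_forall_ne_eq {ι : Type*} [Finite ι] [Nontrivial ι] {v : ι → ℝ} {j₀ : ι}
    {a b : ℝ} (hj₀ : v j₀ = a) (hv : ∀ j, j ≠ j₀ → v j = b) : (⨅ j, v j) = min a b := by
  obtain ⟨j₁, hj₁⟩ := exists_ne j₀
  apply le_antisymm
  · exact le_min (hj₀ ▸ ciInf_le (Finite.bddBelow_range v) j₀)
      (hv j₁ hj₁ ▸ ciInf_le (Finite.bddBelow_range v) j₁)
  · refine le_ciInf fun j => ?_
    rcases eq_or_ne j j₀ with rfl | hj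
    · exact hj₀ ▸ min_le_left a b
    · exact (hv j hj).symm ▸ min_le_right a b

theorem sum_sub_sq_eq {ι : Type*} [Fintype ι] (v : ι → ℝ) (c : ℝ) :
    ∑ j, (v j - c) ^ 2 = ∑ j, v j ^ 2 - 2 * c * ∑ j, v j + Fintype.card ι * c ^ 2 := by
  have hexpand : ∀ j, (v j - c) ^ 2 = v j ^ 2 - 2 * c * v j + c ^ 2 := fun j => by ring
  simp only [hexpand, sum_add_distrib, sum_sub_distrib, ← mul_sum, sum_const, card_univ,
    nsmul_eq_mul]

/-- With `S = ∑ w`, the nonnegative terms `w j * (S - w j)` sum to `S ^ 2 - ∑ w ^ 2 = 0`, so each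
`w j` is `0` or `S`, and two entries equal to `S ≠ 0` would exceed the total. -/
theorem exists_forall_ne_eq_zero_of_sum_sq_eq_sq_sum {ι : Type*} [Fintype ι] [Nonempty ι]
    {w : ι → ℝ} (hw : ∀ j, 0 ≤ w j) (h : ∑ j, w j ^ 2 = (∑ j, w j) ^ 2) :
    ∃ j₀, ∀ j, j ≠ j₀ → w j = 0 := by
  set S := ∑ j, w j
  have hle : ∀ j, w j ≤ S := fun j => single_le_sum (fun i _ => hw i) (mem_univ j)
  have hterm : ∀ j, w j * (S - w j) = 0 := by
    have hsum : ∑ j, w j * (S - w j) = 0 := by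
      simp only [mul_sub, sum_sub_distrib, ← sum_mul, ← sq, h]
      exact sub_eq_zero.2 (sq S).symm
    exact congrFun
      ((Fintype.sum_eq_zero_iff_of_nonneg fun i => mul_nonneg (hw i) (sub_nonneg.2 (hle i))).1 hsum)
  by_cases hzero : ∀ j, w j = 0
  · exact ⟨Classical.arbitrary ι, fun j _ => hzero j⟩
  obtain ⟨j₀, hj₀⟩ := not_forall.1 hzero
  have hj₀S : w j₀ = S := by linarith [(mul_eq_zero.1 (hterm j₀)).resolve_left hj₀]
  refine ⟨j₀, fun j hj => le_antisymm ?_ (hw j)⟩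
  linarith [add_le_sum (fun i _ => hw i) (mem_univ j₀) (mem_univ j) hj.symm]

section SumAndSumSq

variable {d : ℕ} {v : Fin d → ℝ} {s : ℝ}

/-- Shifting by the minimum `m = (1 - s) / d` gives a nonnegative vector whose `ℓ¹` and `ℓ²` norms
are both `s`, so it is supported on a single coordinate. -/
theorem exists_eq_of_iInf_eq_one_sub_div (hd : 0 < d) (hsum : ∑ j, v j = 1)
    (hsq : ∑ j, v j ^ 2 = d) (hs : s ^ 2 = d + 1) (hmin : (⨅ j, v j) = (1 - s) / d) :
    ∃ j₀, v j₀ = ((d - 1) * s + 1) / d ∧ ∀ j, j ≠ j₀ → v j = (1 - s) / d := by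
  have : Nonempty (Fin d) := ⟨⟨0, hd⟩⟩
  have hd' : (d : ℝ) ≠ 0 := by positivity
  set m := (1 - s) / d with hm
  have hw : ∀ j, 0 ≤ v j - m := fun j => sub_nonneg.2 (hmin ▸ ciInf_le (Finite.bddBelow_range v) j)
  have hwsum : ∑ j, (v j - m) = s := by
    simp only [sum_sub_distrib, hsum, sum_const, card_univ, Fintype.card_fin, nsmul_eq_mul, m]
    field_simp
    ring
  have hwsq : ∑ j, (v j - m) ^ 2 = s ^ 2 := by
    rw [sum_sub_sq_eq, hsum, hsq, Fintype.card_fin, hm]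
    field_simp
    linear_combination (1 - (d : ℝ)) * hs
  obtain ⟨j₀, h₀⟩ := exists_forall_ne_eq_zero_of_sum_sq_eq_sq_sum hw (by rw [hwsq, hwsum])
  have hj₀ : v j₀ - m = s := by rw [← hwsum, Fintype.sum_eq_single j₀ h₀]
  refine ⟨j₀, ?_, fun j hj => sub_eq_zero.1 (h₀ j hj)⟩
  rw [sub_eq_iff_eq_add.1 hj₀, hm]
  field_simp
  ring

/-- A coordinate equal to `(1 - (d - 1) s) / d` already accounts for the whole variance about
`c = (s + 1) / d`, forcing all other coordinates to equal `c`. -/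
theorem forall_ne_eq_of_eq_one_sub_mul_div (hsum : ∑ j, v j = 1) (hsq : ∑ j, v j ^ 2 = d)
    (hs : s ^ 2 = d + 1) {j₀ : Fin d} (hj₀ : v j₀ = (1 - (d - 1) * s) / d) :
    ∀ j, j ≠ j₀ → v j = (s + 1) / d := by
  have hd' : (d : ℝ) ≠ 0 := by have := j₀.pos; positivity
  set c := (s + 1) / d with hc
  have hrest : ∑ j ∈ univ.erase j₀, (v j - c) ^ 2 = 0 := by
    rw [sum_erase_eq_sub (mem_univ j₀), sum_sub_sq_eq, hsum, hsq, Fintype.card_fin, hj₀, hc]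
    field_simp
    linear_combination ((d : ℝ) - (d : ℝ) ^ 2) * hs
  intro j hj
  have hj' := (sum_eq_zero_iff_of_nonneg fun i _ => sq_nonneg (v i - c)).1 hrest j (by simp [hj])
  exact sub_eq_zero.1 (pow_eq_zero_iff two_ne_zero |>.1 hj')

end SumAndSumSq

/-- Equality conditions for the spectral bounds.
(a) `min_j v j = −(√(d+1) − 1)/d` iff `v` takes the value `((d−1)√(d+1)+1)/d` at exactly one
coordinate and `(1 − √(d+1))/d` at the remaining `d−1` coordinates;
(b) `min_j v j = −((d−1)√(d+1) − 1)/d` iff `v` takes the value `(√(d+1)+1)/d` at exactly `d−1`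
coordinates and `(1 − (d−1)√(d+1))/d` at the remaining coordinate. -/
theorem stmt_1 (d : ℕ) (hd : 2 ≤ d) (v : Fin d → ℝ)
    (hsum : ∑ j, v j = 1) (hsq : ∑ j, v j ^ 2 = d) :
    ((⨅ j, v j) = -((Real.sqrt (d + 1) - 1) / d) ↔
      ∃ j₀, v j₀ = (((d : ℝ) - 1) * Real.sqrt (d + 1) + 1) / d ∧
        ∀ j, j ≠ j₀ → v j = (1 - Real.sqrt (d + 1)) / d) ∧
    ((⨅ j, v j) = -(((((d : ℝ) - 1)) * Real.sqrt (d + 1) - 1) / d) ↔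
      ∃ j₀, v j₀ = (1 - ((d : ℝ) - 1) * Real.sqrt (d + 1)) / d ∧
        ∀ j, j ≠ j₀ → v j = (Real.sqrt (d + 1) + 1) / d) := by
  have : Nontrivial (Fin d) := Fin.nontrivial_iff_two_le.2 hd
  have hs : Real.sqrt (d + 1) ^ 2 = d + 1 := Real.sq_sqrt (by positivity)
  have hds : 0 ≤ (d : ℝ) * Real.sqrt (d + 1) := by positivity
  simp only [← neg_div, neg_sub]
  refine ⟨⟨exists_eq_of_iInf_eq_one_sub_div (by omega) hsum hsq hs, ?_⟩, ⟨fun hmin => ?_, ?_⟩⟩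
  · rintro ⟨j₀, hj₀, hv⟩
    rw [iInf_eq_min_of_forall_ne_eq hj₀ hv, min_eq_right]
    gcongr
    linarith
  · obtain ⟨j₀, hj₀⟩ := exists_eq_ciInf_of_finite (f := v)
    exact ⟨j₀, hj₀.trans hmin, forall_ne_eq_of_eq_one_sub_mul_div hsum hsq hs (hj₀.trans hmin)⟩
  · rintro ⟨j₀, hj₀, hv⟩
    rw [iInf_eq_min_of_forall_ne_eq hj₀ hv, min_eq_left]
    gcongr
    linarith
end

section
/- Let Q be an NQPR in dimension d ≥ 2. Then there exists an index j such that the minimal eigenvalue of Q_j is at most −(√(d+1) − 1)/d. Equivalently, the negativity N(Q) = −min_j λ_min(Q_j) satisfies N(Q) ≥ (√(d+1) − 1)/d. -/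
/-!
In fact every `Q j` satisfies the bound. Its eigenvalues `μ i` have `∑ μ i = tr Q j = 1` and
`∑ μ i ^ 2 = tr (Q j * Q j) = d`. For the least eigenvalue `m` the numbers `μ i - m` are
nonnegative, so `∑ (μ i - m) ^ 2 ≤ (∑ (μ i - m)) ^ 2`, i.e. `d - 2m + d m² ≤ (1 - d m)²`, i.e.
`(d - 1) (d m² - 2m - 1) ≥ 0`. As `d m ≤ 1`, this gives `(1 - d m)² ≥ d + 1` with `1 - d m ≥ 0`,
hence `1 - d m ≥ √(d + 1)`.
-/

open Finset

namespace Matrix.IsHermitian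

variable {𝕜 n : Type*} [RCLike 𝕜] [Fintype n] [DecidableEq n]

theorem trace_mul_self_eq_sum_sq_eigenvalues {A : Matrix n n 𝕜} (hA : A.IsHermitian) :
    (A * A).trace = ∑ i, (hA.eigenvalues i : 𝕜) ^ 2 := by
  conv_lhs => rw [hA.spectral_theorem, ← map_mul, Unitary.conjStarAlgAut_apply, trace_mul_cycle,
    Unitary.coe_star_mul_self, one_mul, diagonal_mul_diagonal, trace_diagonal]
  simp [sq]

end Matrix.IsHermitian

theorem le_neg_sqrt_of_mul_le_one_of_quadratic_nonneg {n m : ℝ} (hn : 0 < n) (hnm : n * m ≤ 1)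
    (hq : 0 ≤ n * m ^ 2 - 2 * m - 1) : m ≤ -((√(n + 1) - 1) / n) := by
  have hsqrt : √(n + 1) ≤ 1 - n * m :=
    Real.sqrt_le_iff.mpr ⟨by linarith, by nlinarith⟩
  rw [neg_div', le_div_iff₀ hn]
  linarith

section

variable {ι : Type*} [Fintype ι] {μ : ι → ℝ} {m : ℝ}

theorem card_mul_le_one_of_sum_eq_one (hm : ∀ i, m ≤ μ i) (h1 : ∑ i, μ i = 1) :
    Fintype.card ι * m ≤ 1 := by
  simpa [h1] using card_nsmul_le_sum univ μ m fun i _ => hm i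

theorem card_mul_sq_sub_two_mul_sub_one_nonneg (hcard : 2 ≤ Fintype.card ι)
    (hm : ∀ i, m ≤ μ i) (h1 : ∑ i, μ i = 1) (h2 : ∑ i, μ i ^ 2 = Fintype.card ι) :
    0 ≤ Fintype.card ι * m ^ 2 - 2 * m - 1 := by
  set n : ℝ := (Fintype.card ι : ℝ)
  have hsum : ∑ i, (μ i - m) = 1 - n * m := by
    simp [sum_sub_distrib, h1, n]
  have hsum_sq : ∑ i, (μ i - m) ^ 2 = n - 2 * m + n * m ^ 2 := by
    simp only [sub_sq, sum_add_distrib, sum_sub_distrib, ← mul_sum, ← sum_mul, h1, h2]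
    simp [n]
  have key := sum_sq_le_sq_sum_of_nonneg (s := univ) fun i _ => sub_nonneg.mpr (hm i)
  rw [hsum, hsum_sq] at key
  have hn : (1 : ℝ) < n := by simp only [n]; exact_mod_cast hcard
  have : 0 ≤ (n - 1) * (n * m ^ 2 - 2 * m - 1) := by linear_combination key
  exact nonneg_of_mul_nonneg_right this (by linarith)

theorem iInf_le_neg_of_sum_eq_one_of_sum_sq_eq_card (hcard : 2 ≤ Fintype.card ι)
    (h1 : ∑ i, μ i = 1) (h2 : ∑ i, μ i ^ 2 = Fintype.card ι) :
    ⨅ i, μ i ≤ -((√(Fintype.card ι + 1) - 1) / Fintype.card ι) := by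
  have hm : ∀ i, ⨅ j, μ j ≤ μ i := fun i => ciInf_le (Finite.bddBelow_range μ) i
  exact le_neg_sqrt_of_mul_le_one_of_quadratic_nonneg (by positivity) (card_mul_le_one_of_sum_eq_one hm h1)
    (card_mul_sq_sub_two_mul_sub_one_nonneg hcard hm h1 h2)

end

theorem stmt_2_general (d : ℕ) (hd : 2 ≤ d)
    (Q : Fin (d ^ 2) → Matrix (Fin d) (Fin d) ℂ)
    (hherm : ∀ j, (Q j).IsHermitian)
    (htr : ∀ j, (Q j).trace = 1)
    (hpair : ∀ j k, (Q j * Q k).trace = if j = k then (d : ℂ) else 0) :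
    ∃ j, (⨅ i, (hherm j).eigenvalues i) ≤ -((Real.sqrt (d + 1) - 1) / d) := by
  let j : Fin (d ^ 2) := ⟨0, by positivity⟩
  refine ⟨j, iInf_le_neg_of_sum_eq_one_of_sum_sq_eq_card ?_ ?_ ?_ |>.trans_eq ?_⟩
  · simpa using hd
  · apply RCLike.ofReal_injective (K := ℂ)
    push_cast
    rw [← (hherm j).trace_eq_sum_eigenvalues, htr j]
  · apply RCLike.ofReal_injective (K := ℂ)
    push_cast
    rw [← (hherm j).trace_mul_self_eq_sum_sq_eigenvalues, hpair j j, if_pos rfl, Fintype.card_fin]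
  · simp

/-- For any NQPR `Q` in dimension `d ≥ 2`, there is an index `j` such that the
minimal eigenvalue of `Q j` is at most `−(√(d+1) − 1)/d`. -/
theorem stmt_2 (d : ℕ) (hd : 2 ≤ d)
    (Q : Fin (d ^ 2) → Matrix (Fin d) (Fin d) ℂ)
    (hherm : ∀ j, (Q j).IsHermitian)
    (htr : ∀ j, (Q j).trace = 1)
    (hpair : ∀ j k, (Q j * Q k).trace = if j = k then (d : ℂ) else 0)
    (hsum : ∑ j, Q j = (d : ℂ) • (1 : Matrix (Fin d) (Fin d) ℂ)) :
    ∃ j, (⨅ i, (hherm j).eigenvalues i) ≤ -((Real.sqrt (d + 1) - 1) / d) :=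
  stmt_2_general d hd Q hherm htr hpair
end

section
/- Let Q be an NQPR in dimension d ≥ 2. Then min_j λ_min(Q_j) = −(√(d+1) − 1)/d holds if and only if there exists a SIC Π_1, …, Π_{d²} in dimension d such that Q_j = √(d+1)·Π_j + ((1 − √(d+1))/d)·I for every j. -/
/-!
Write `s = √(d+1)` and `μ = (1 - s)/d`. The eigenvalues `x` of each `Q j` satisfy
`∑ x = tr Q j = 1` and `∑ x² = tr (Q j)² = d`, so `y = x - μ` has `∑ y = s` and `∑ y² = s²`.
If the minimal eigenvalue is `μ`, all `y ≥ 0`, so `∑ y (s - y) = 0` is a sum of nonnegative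
terms and every `y ∈ {0, s}`: `Q j` has spectrum in `{μ, μ + s}`, i.e. `P j = (Q j - μ)/s` is a
projector, and the SIC overlaps follow from the NQPR ones because `d μ² - 2μ = 1`. Conversely,
`Q j = s P j + μ` with `P j` a projector has spectrum in `{μ, μ + s}`, and `μ` does occur since
`tr Q j = 1 ≠ d (μ + s)`.
-/

open Matrix

theorem eq_zero_or_eq_sum_of_sum_sq_eq_sq_sum {ι : Type*} [Fintype ι] {y : ι → ℝ}
    (hy : ∀ i, 0 ≤ y i) (h : ∑ i, y i ^ 2 = (∑ i, y i) ^ 2) (i : ι) :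
    y i = 0 ∨ y i = ∑ j, y j := by
  set S := ∑ j, y j
  have hterm : ∀ j, 0 ≤ y j * (S - y j) := fun j =>
    mul_nonneg (hy j) (sub_nonneg.2 (Finset.single_le_sum (fun k _ => hy k) (Finset.mem_univ j)))
  have hsum : ∑ j, y j * (S - y j) = 0 := by
    simp only [mul_sub, Finset.sum_sub_distrib, ← Finset.sum_mul, ← sq, h]
    ring
  have := (Finset.sum_eq_zero_iff_of_nonneg fun j _ => hterm j).1 hsum i (Finset.mem_univ i)
  exact (mul_eq_zero.1 this).imp id fun hS => (sub_eq_zero.1 hS).symm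

theorem iInf_iInf_eq_iff {α ι κ : Type*} [ConditionallyCompleteLinearOrder α]
    [Finite ι] [Finite κ] [Nonempty ι] [Nonempty κ] {f : ι → κ → α} {m : α} :
    (⨅ j, ⨅ i, f j i) = m ↔ (∀ j i, m ≤ f j i) ∧ ∃ j i, f j i = m := by
  have hle : ∀ j i, (⨅ j, ⨅ i, f j i) ≤ f j i := fun j i =>
    (ciInf_le (Set.finite_range _).bddBelow j).trans (ciInf_le (Set.finite_range _).bddBelow i)
  constructor
  · rintro rfl
    refine ⟨hle, ?_⟩
    obtain ⟨j, hj⟩ := exists_eq_ciInf_of_finite (f := fun j => ⨅ i, f j i)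
    obtain ⟨i, hi⟩ := exists_eq_ciInf_of_finite (f := f j)
    exact ⟨j, i, hi.trans hj⟩
  · rintro ⟨hm, j, i, rfl⟩
    exact le_antisymm (hle j i) (le_ciInf fun j' => le_ciInf fun i' => hm j' i')

theorem isIdempotentElem_iff_of_eq_smul_add_smul_one {K A : Type*} [Field K] [Ring A]
    [Algebra K A] {P Q : A} {s μ : K} (hs : s ≠ 0) (hQ : Q = s • P + μ • 1) :
    IsIdempotentElem P ↔ (Q - μ • 1) * (Q - (μ + s) • 1) = 0 := by
  have : (Q - μ • 1) * (Q - (μ + s) • 1) = s ^ 2 • (P * P - P) := by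
    rw [hQ, add_smul, add_sub_cancel_right, ← sub_sub, add_sub_cancel_right]
    simp only [mul_sub, mul_smul_comm, smul_mul_assoc, smul_smul, mul_one, smul_sub, sq]
  rw [this, smul_eq_zero, sub_eq_zero]
  simp [hs, IsIdempotentElem]

theorem mul_sq_sub_two_mul_eq_one {K : Type*} [Field K] {d s μ : K} (hd : d ≠ 0)
    (hs : s ^ 2 = d + 1) (hμ : d * μ = 1 - s) : d * μ ^ 2 - 2 * μ = 1 := by
  apply mul_left_cancel₀ hd
  linear_combination (d * μ - 1 - s) * hμ + hs

namespace Matrix.IsHermitian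

variable {𝕜 n : Type*} [RCLike 𝕜] [Fintype n] [DecidableEq n] {A : Matrix n n 𝕜}

theorem trace_cfc (hA : A.IsHermitian) (f : ℝ → ℝ) :
    (cfc f A).trace = ∑ i, (f (hA.eigenvalues i) : 𝕜) := by
  rw [hA.cfc_eq, IsHermitian.cfc, Unitary.conjStarAlgAut_apply, trace_mul_cycle,
    Unitary.coe_star_mul_self, one_mul, trace_diagonal]
  rfl

theorem trace_mul_self (hA : A.IsHermitian) :
    (A * A).trace = ∑ i, (hA.eigenvalues i : 𝕜) ^ 2 := by
  rw [← sq, ← cfc_pow_id (R := ℝ) A 2 hA.isSelfAdjoint, hA.trace_cfc]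
  simp

theorem sum_eigenvalues_eq_of_trace_eq (hA : A.IsHermitian) {t : ℝ} (h : A.trace = t) :
    ∑ i, hA.eigenvalues i = t :=
  RCLike.ofReal_injective (K := 𝕜) <| by push_cast; rw [← h, hA.trace_eq_sum_eigenvalues]

theorem sum_eigenvalues_sq_eq_of_trace_mul_self_eq (hA : A.IsHermitian) {t : ℝ}
    (h : (A * A).trace = t) : ∑ i, hA.eigenvalues i ^ 2 = t :=
  RCLike.ofReal_injective (K := 𝕜) <| by push_cast; rw [← h, hA.trace_mul_self]

theorem sub_smul_one_mul_sub_smul_one_eq_zero_iff (hA : A.IsHermitian) (a b : ℝ) :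
    (A - (a : 𝕜) • 1) * (A - (b : 𝕜) • 1) = 0 ↔
      ∀ i, hA.eigenvalues i = a ∨ hA.eigenvalues i = b := by
  have hcfc :
      (A - (a : 𝕜) • 1) * (A - (b : 𝕜) • 1) = cfc (fun x => (x - a) * (x - b)) A := by
    rw [cfc_mul .., cfc_sub .., cfc_sub .., cfc_id' .., cfc_const .., cfc_const ..]
    simp [Algebra.algebraMap_eq_smul_one]
  rw [hcfc, ← cfc_zero ℝ A, cfc_eq_cfc_iff_eqOn, hA.spectrum_real_eq_range_eigenvalues]
  simp [Set.EqOn, sub_eq_zero]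

theorem isIdempotentElem_iff_eigenvalues_eq_or_eq_add (hA : A.IsHermitian) {P : Matrix n n 𝕜}
    {s μ : ℝ} (hs : s ≠ 0) (hAP : A = (s : 𝕜) • P + (μ : 𝕜) • 1) :
    IsIdempotentElem P ↔ ∀ i, hA.eigenvalues i = μ ∨ hA.eigenvalues i = μ + s := by
  rw [isIdempotentElem_iff_of_eq_smul_add_smul_one (RCLike.ofReal_ne_zero.2 hs) hAP,
    ← RCLike.ofReal_add, hA.sub_smul_one_mul_sub_smul_one_eq_zero_iff]

end Matrix.IsHermitian

section Spectrum

variable {d : ℕ} {s μ : ℝ}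

theorem eq_or_eq_add_of_forall_le_of_sum_sq_eq {x : Fin d → ℝ} (h1 : ∑ i, x i = 1)
    (h2 : ∑ i, x i ^ 2 = d) (hs : s ^ 2 = d + 1) (hμ : d * μ = 1 - s) (hlb : ∀ i, μ ≤ x i)
    (i : Fin d) : x i = μ ∨ x i = μ + s := by
  have hd : (d : ℝ) ≠ 0 := by
    rintro hd
    obtain rfl : d = 0 := by exact_mod_cast hd
    simp at h1
  have hkey := mul_sq_sub_two_mul_eq_one hd hs hμ
  have hsum : ∑ j, (x j - μ) = s := by
    simp only [Finset.sum_sub_distrib, h1, Finset.sum_const, Finset.card_univ, Fintype.card_fin,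
      nsmul_eq_mul]
    linarith
  have hsum_sq : ∑ j, (x j - μ) ^ 2 = (∑ j, (x j - μ)) ^ 2 := by
    simp only [sub_sq, Finset.sum_add_distrib, Finset.sum_sub_distrib, ← Finset.mul_sum,
      ← Finset.sum_mul, h1, h2, hsum, Finset.sum_const, Finset.card_univ, Fintype.card_fin,
      nsmul_eq_mul]
    linarith
  exact (eq_zero_or_eq_sum_of_sum_sq_eq_sq_sum (fun j => sub_nonneg.2 (hlb j)) hsum_sq i).imp
    sub_eq_zero.1 fun h => by linarith

theorem exists_eq_of_forall_eq_or_eq_add {x : Fin d → ℝ} (hd : 2 ≤ d) (h1 : ∑ i, x i = 1)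
    (hs : 0 < s) (hμ : d * μ = 1 - s) (hx : ∀ i, x i = μ ∨ x i = μ + s) : ∃ i, x i = μ := by
  by_contra! hne
  have hall : ∀ i, x i = μ + s := fun i => (hx i).resolve_left (hne i)
  simp only [hall, Finset.sum_const, Finset.card_univ, Fintype.card_fin, nsmul_eq_mul] at h1
  have hd' : (2 : ℝ) ≤ d := by exact_mod_cast hd
  nlinarith

end Spectrum

section SIC

variable {d : ℕ} {s μ : ℝ}

theorem trace_inv_smul_sub_smul_one {Q : Matrix (Fin d) (Fin d) ℂ} (hs : s ≠ 0)
    (hμ : d * μ = 1 - s) (hQ : Q.trace = 1) : ((s : ℂ)⁻¹ • (Q - (μ : ℂ) • 1)).trace = 1 := by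
  have hμ' : (d : ℂ) * μ = 1 - s := by exact_mod_cast hμ
  have hs' : (s : ℂ) ≠ 0 := by exact_mod_cast hs
  rw [trace_smul, trace_sub, trace_smul, trace_one, hQ, Fintype.card_fin, smul_eq_mul,
    smul_eq_mul, mul_comm (μ : ℂ), hμ', sub_sub_cancel, inv_mul_cancel₀ hs']

theorem trace_inv_smul_sub_smul_one_mul {Q R : Matrix (Fin d) (Fin d) ℂ} (hd : d ≠ 0)
    (hs : s ^ 2 = d + 1) (hμ : d * μ = 1 - s) (hQ : Q.trace = 1) (hR : R.trace = 1) :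
    ((s : ℂ)⁻¹ • (Q - (μ : ℂ) • 1) * ((s : ℂ)⁻¹ • (R - (μ : ℂ) • 1))).trace =
      ((Q * R).trace + 1) / (d + 1) := by
  have hs' : (s : ℂ) ^ 2 = d + 1 := by exact_mod_cast hs
  have hμ' : (d : ℂ) * μ = 1 - s := by exact_mod_cast hμ
  have hkey := mul_sq_sub_two_mul_eq_one (by exact_mod_cast hd) hs' hμ'
  simp only [smul_mul_smul, sub_mul, mul_sub, Matrix.smul_mul, Matrix.mul_smul, one_mul, mul_one,
    trace_smul, trace_sub, trace_one, hQ, hR, Fintype.card_fin, smul_eq_mul]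
  have hs0 : (s : ℂ) ≠ 0 := by
    rintro h
    rw [h, zero_pow two_ne_zero] at hs'
    exact Nat.cast_add_one_ne_zero d hs'.symm
  rw [← hs']
  field_simp
  linear_combination hkey

end SIC

theorem stmt_3_general (d : ℕ) (hd : 2 ≤ d)
    (Q : Fin (d ^ 2) → Matrix (Fin d) (Fin d) ℂ)
    (hherm : ∀ j, (Q j).IsHermitian)
    (htr : ∀ j, (Q j).trace = 1)
    (hpair : ∀ j k, (Q j * Q k).trace = if j = k then (d : ℂ) else 0) :
    (⨅ j, ⨅ i, (hherm j).eigenvalues i) = -((Real.sqrt (d + 1) - 1) / d) ↔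
      ∃ P : Fin (d ^ 2) → Matrix (Fin d) (Fin d) ℂ,
        (∀ j, (P j).IsHermitian) ∧
        (∀ j, P j * P j = P j) ∧
        (∀ j, (P j).trace = 1) ∧
        (∀ j k, (P j * P k).trace =
          ((d : ℂ) * (if j = k then 1 else 0) + 1) / ((d : ℂ) + 1)) ∧
        (∀ j, Q j = (Real.sqrt (d + 1) : ℂ) • P j +
          (((1 - Real.sqrt (d + 1)) / d : ℝ) : ℂ) • (1 : Matrix (Fin d) (Fin d) ℂ)) := by
  set s := Real.sqrt (d + 1)
  set μ := (1 - s) / d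
  have hd0 : d ≠ 0 := by omega
  have hs : s ^ 2 = d + 1 := Real.sq_sqrt (by positivity)
  have hs0 : 0 < s := Real.sqrt_pos.2 (by positivity)
  have hμ : d * μ = 1 - s := mul_div_cancel₀ _ (by exact_mod_cast hd0)
  have : NeZero d := ⟨hd0⟩
  have hsum : ∀ j, ∑ i, (hherm j).eigenvalues i = 1 := fun j =>
    (hherm j).sum_eigenvalues_eq_of_trace_eq (by simp [htr])
  rw [show -((s - 1) / d) = μ by ring, iInf_iInf_eq_iff]
  constructor
  · rintro ⟨hlb, -⟩
    have hsq : ∀ j, ∑ i, (hherm j).eigenvalues i ^ 2 = d := fun j =>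
      (hherm j).sum_eigenvalues_sq_eq_of_trace_mul_self_eq (by simp [hpair])
    have hQP : ∀ j, Q j = (s : ℂ) • ((s : ℂ)⁻¹ • (Q j - (μ : ℂ) • 1)) + (μ : ℂ) • 1 :=
      fun j => by rw [smul_inv_smul₀ (by exact_mod_cast hs0.ne'), sub_add_cancel]
    refine ⟨fun j => (s : ℂ)⁻¹ • (Q j - (μ : ℂ) • 1), fun j => ?_, fun j => ?_,
      fun j => trace_inv_smul_sub_smul_one hs0.ne' hμ (htr j), fun j k => ?_, hQP⟩
    · simp [IsHermitian, (hherm j).eq]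
    · exact ((hherm j).isIdempotentElem_iff_eigenvalues_eq_or_eq_add hs0.ne' (hQP j)).2
        (eq_or_eq_add_of_forall_le_of_sum_sq_eq (hsum j) (hsq j) hs hμ (hlb j))
    · rw [trace_inv_smul_sub_smul_one_mul hd0 hs hμ (htr j) (htr k), hpair, mul_ite, mul_one,
        mul_zero]
  · rintro ⟨P, -, hPidem, -, -, hQP⟩
    have hspec : ∀ j i, (hherm j).eigenvalues i = μ ∨ (hherm j).eigenvalues i = μ + s :=
      fun j => ((hherm j).isIdempotentElem_iff_eigenvalues_eq_or_eq_add hs0.ne' (hQP j)).1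
        (hPidem j)
    obtain ⟨i, hi⟩ := exists_eq_of_forall_eq_or_eq_add hd (hsum 0) hs0 hμ (hspec 0)
    exact ⟨fun j i => (hspec j i).elim ge_of_eq (fun h => h ▸ le_add_of_nonneg_right hs0.le),
      0, i, hi⟩

/-- For an NQPR `Q` in dimension `d ≥ 2`, the minimal negativity bound
`min_j λ_min(Q j) = −(√(d+1) − 1)/d` is attained iff there is a SIC `Π` such that
`Q j = √(d+1)·Π j + ((1 − √(d+1))/d)·I` for every `j`. -/
theorem stmt_3 (d : ℕ) (hd : 2 ≤ d)
    (Q : Fin (d ^ 2) → Matrix (Fin d) (Fin d) ℂ)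
    (hherm : ∀ j, (Q j).IsHermitian)
    (htr : ∀ j, (Q j).trace = 1)
    (hpair : ∀ j k, (Q j * Q k).trace = if j = k then (d : ℂ) else 0)
    (hsum : ∑ j, Q j = (d : ℂ) • (1 : Matrix (Fin d) (Fin d) ℂ)) :
    (⨅ j, ⨅ i, (hherm j).eigenvalues i) = -((Real.sqrt (d + 1) - 1) / d) ↔
      ∃ P : Fin (d ^ 2) → Matrix (Fin d) (Fin d) ℂ,
        (∀ j, (P j).IsHermitian) ∧
        (∀ j, P j * P j = P j) ∧
        (∀ j, (P j).trace = 1) ∧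
        (∀ j k, (P j * P k).trace =
          ((d : ℂ) * (if j = k then 1 else 0) + 1) / ((d : ℂ) + 1)) ∧
        (∀ j, Q j = (Real.sqrt (d + 1) : ℂ) • P j +
          (((1 - Real.sqrt (d + 1)) / d : ℝ) : ℂ) • (1 : Matrix (Fin d) (Fin d) ℂ)) :=
  stmt_3_general d hd Q hherm htr hpair
end

section
/- Let Q be an NQPR in dimension d ≥ 2. Then every eigenvalue of every Q_j is at least −((d−1)√(d+1) − 1)/d. Equivalently, the negativity N(Q) = −min_j λ_min(Q_j) satisfies N(Q) ≤ ((d−1)√(d+1) − 1)/d. -/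
open Finset Matrix
open scoped ComplexOrder

/-! Let `v` be a unit eigenvector of `Q j` for the eigenvalue `λ` and put `x k = ⟪v, Q k v⟫`.
From `∑ Q k = d • 1` we get `∑ x k = d`; since the `Q k / √d` are orthonormal for the
Hilbert–Schmidt inner product, Bessel's inequality against `v v*` gives `∑ x k ^ 2 ≤ d`.
Cauchy–Schwarz over the `d² - 1` indices `k ≠ j` then yields `(d - λ)² ≤ (d² - 1)(d - λ²)`,
which rearranges to `(dλ - 1)² ≤ (d - 1)²(d + 1)`. -/

section
variable {n 𝕜 : Type*} [RCLike 𝕜] [Fintype n]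

theorem trace_vecMulVec_star_mul (v : n → 𝕜) (M : Matrix n n 𝕜) :
    (vecMulVec v (star v) * M).trace = star v ⬝ᵥ M *ᵥ v := by
  rw [vecMulVec_mul, trace_vecMulVec, dotProduct_comm, dotProduct_mulVec]

theorem trace_vecMulVec_star_mul_conjTranspose {v : n → 𝕜} (hv : star v ⬝ᵥ v = 1) :
    (vecMulVec v (star v) * (vecMulVec v (star v))ᴴ).trace = 1 := by
  rw [conjTranspose_vecMulVec, star_star, vecMulVec_mul_vecMulVec, hv, one_smul, trace_vecMulVec,
    dotProduct_comm, hv]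

theorem sum_re_dotProduct_mulVec {ι : Type*} [Fintype ι] (A : ι → Matrix n n 𝕜) (v : n → 𝕜) :
    ∑ k, RCLike.re (star v ⬝ᵥ A k *ᵥ v) = RCLike.re (star v ⬝ᵥ (∑ k, A k) *ᵥ v) := by
  rw [sum_mulVec, dotProduct_sum, map_sum]

variable [DecidableEq n] {ι : Type*} [Fintype ι] [DecidableEq ι]

theorem sum_norm_trace_mul_conjTranspose_sq_le {A : ι → Matrix n n 𝕜} {c : ℝ} (hc : 0 < c)
    (hA : ∀ k l, (A k * (A l)ᴴ).trace = if k = l then (c : 𝕜) else 0) (P : Matrix n n 𝕜) :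
    ∑ k, ‖(P * (A k)ᴴ).trace‖ ^ 2 ≤ c * RCLike.re (P * Pᴴ).trace := by
  let _ := toMatrixSeminormedAddCommGroup (1 : Matrix n n 𝕜) PosSemidef.one
  let _ := toMatrixInnerProductSpace (1 : Matrix n n 𝕜) PosSemidef.one
  have inner_eq (X Y : Matrix n n 𝕜) : inner 𝕜 X Y = (Y * Xᴴ).trace := by
    change (Y * 1 * Xᴴ).trace = _
    rw [mul_one]
  have hsqrt : (Real.sqrt c : 𝕜) ^ 2 = c := by
    rw [← RCLike.ofReal_pow, Real.sq_sqrt hc.le]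
  have hsqrt0 : (Real.sqrt c : 𝕜) ≠ 0 := by
    rw [RCLike.ofReal_ne_zero]; positivity
  let e k := ((Real.sqrt c)⁻¹ : 𝕜) • A k
  have he : Orthonormal 𝕜 e := by
    rw [orthonormal_iff_ite]
    intro k l
    simp only [e, inner_eq, conjTranspose_smul, Matrix.smul_mul, Matrix.mul_smul, trace_smul,
      hA l k, star_inv₀, RCLike.star_def, RCLike.conj_ofReal, smul_eq_mul, eq_comm (a := l)]
    split_ifs
    · rw [← hsqrt]; field_simp
    · simp
  have bessel := he.sum_inner_products_le (s := univ) P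
  simp only [e, inner_eq, conjTranspose_smul, Matrix.mul_smul, trace_smul, norm_smul, mul_pow,
    star_inv₀, RCLike.star_def, RCLike.conj_ofReal, norm_inv, RCLike.norm_ofReal,
    abs_of_nonneg (Real.sqrt_nonneg c), inv_pow, Real.sq_sqrt hc.le, ← mul_sum,
    @norm_sq_eq_re_inner 𝕜 _ _ _ _ P] at bessel
  rwa [inv_mul_le_iff₀ hc] at bessel

theorem sum_sq_re_dotProduct_mulVec_le {A : ι → Matrix n n 𝕜} (hherm : ∀ k, (A k).IsHermitian)
    {c : ℝ} (hc : 0 < c) (hA : ∀ k l, (A k * A l).trace = if k = l then (c : 𝕜) else 0)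
    {v : n → 𝕜} (hv : star v ⬝ᵥ v = 1) :
    ∑ k, RCLike.re (star v ⬝ᵥ A k *ᵥ v) ^ 2 ≤ c := by
  set P := vecMulVec v (star v)
  calc ∑ k, RCLike.re (star v ⬝ᵥ A k *ᵥ v) ^ 2 ≤ ∑ k, ‖(P * (A k)ᴴ).trace‖ ^ 2 := by
        refine sum_le_sum fun k _ => ?_
        rw [(hherm k).eq, trace_vecMulVec_star_mul]
        exact sq_le_sq.mpr ((RCLike.abs_re_le_norm _).trans (le_abs_self _))
    _ ≤ c * RCLike.re (P * Pᴴ).trace :=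
        sum_norm_trace_mul_conjTranspose_sq_le hc (fun k l => by rw [(hherm l).eq, hA]) P
    _ = c := by rw [trace_vecMulVec_star_mul_conjTranspose hv, RCLike.one_re, mul_one]

end

theorem sq_sum_sub_le_card_sub_one_mul {ι : Type*} [Fintype ι] [DecidableEq ι] (x : ι → ℝ)
    (j : ι) : (∑ k, x k - x j) ^ 2 ≤ (Fintype.card ι - 1) * (∑ k, x k ^ 2 - x j ^ 2) := by
  have hj := mem_univ j
  calc (∑ k, x k - x j) ^ 2 = (∑ k ∈ univ.erase j, x k) ^ 2 := by rw [sum_erase_eq_sub hj]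
    _ ≤ #(univ.erase j) * ∑ k ∈ univ.erase j, x k ^ 2 := sq_sum_le_card_mul_sum_sq
    _ = (Fintype.card ι - 1) * (∑ k, x k ^ 2 - x j ^ 2) := by
      rw [card_erase_of_mem hj, Nat.cast_pred (card_pos.mpr ⟨j, hj⟩), card_univ,
        sum_erase_eq_sub hj]

theorem neg_le_of_sq_sub_le {d l : ℝ} (hd : 1 ≤ d)
    (h : (d - l) ^ 2 ≤ (d ^ 2 - 1) * (d - l ^ 2)) :
    -(((d - 1) * Real.sqrt (d + 1) - 1) / d) ≤ l := by
  have hs := Real.sq_sqrt (by linarith : (0 : ℝ) ≤ d + 1)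
  have hb : 0 ≤ (d - 1) * Real.sqrt (d + 1) := by
    have := Real.sqrt_nonneg (d + 1); nlinarith
  have hsq : (d * l - 1) ^ 2 ≤ ((d - 1) * Real.sqrt (d + 1)) ^ 2 := by
    rw [mul_pow, hs]; nlinarith
  have := (abs_le_of_sq_le_sq' hsq hb).1
  rw [neg_le, le_div_iff₀ (by linarith)]
  linarith

theorem stmt_4_general (d : ℕ)
    (Q : Fin (d ^ 2) → Matrix (Fin d) (Fin d) ℂ)
    (hherm : ∀ j, (Q j).IsHermitian)
    (hpair : ∀ j k, (Q j * Q k).trace = if j = k then (d : ℂ) else 0)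
    (hsum : ∑ j, Q j = (d : ℂ) • (1 : Matrix (Fin d) (Fin d) ℂ)) :
    ∀ j i, -((((d : ℝ) - 1) * Real.sqrt (d + 1) - 1) / d) ≤ (hherm j).eigenvalues i := by
  intro j i
  have hd : (1 : ℝ) ≤ d := by exact_mod_cast i.pos
  set v := ⇑((hherm j).eigenvectorBasis i)
  have hv : star v ⬝ᵥ v = 1 := by
    rw [dotProduct_comm, ← EuclideanSpace.inner_eq_star_dotProduct, inner_self_eq_norm_sq_to_K,
      ((hherm j).eigenvectorBasis.orthonormal.1 i)]
    simp
  let x k := RCLike.re (star v ⬝ᵥ Q k *ᵥ v)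
  have hsum_x : ∑ k, x k = d := by
    simp only [x]
    rw [sum_re_dotProduct_mulVec Q v, hsum, smul_mulVec, one_mulVec, dotProduct_smul, hv]
    simp
  have hsq_x : ∑ k, x k ^ 2 ≤ d :=
    sum_sq_re_dotProduct_mulVec_le hherm (by positivity) (fun k l => by rw [hpair, RCLike.ofReal_natCast]) hv
  have hxj : x j = (hherm j).eigenvalues i := ((hherm j).eigenvalues_eq i).symm
  have hCS := sq_sum_sub_le_card_sub_one_mul x j
  rw [hsum_x, hxj, Fintype.card_fin, Nat.cast_pow] at hCS
  exact neg_le_of_sq_sub_le hd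
    (hCS.trans (mul_le_mul_of_nonneg_left (by linarith) (by nlinarith)))

/-- For any NQPR `Q` in dimension `d ≥ 2`, every eigenvalue of every `Q j` is at
least `−((d−1)√(d+1) − 1)/d`. -/
theorem stmt_4 (d : ℕ) (hd : 2 ≤ d)
    (Q : Fin (d ^ 2) → Matrix (Fin d) (Fin d) ℂ)
    (hherm : ∀ j, (Q j).IsHermitian)
    (htr : ∀ j, (Q j).trace = 1)
    (hpair : ∀ j k, (Q j * Q k).trace = if j = k then (d : ℂ) else 0)
    (hsum : ∑ j, Q j = (d : ℂ) • (1 : Matrix (Fin d) (Fin d) ℂ)) :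
    ∀ j i, -((((d : ℝ) - 1) * Real.sqrt (d + 1) - 1) / d) ≤ (hherm j).eigenvalues i :=
  stmt_4_general d Q hherm hpair hsum
end

section
/- Let Q be an NQPR in dimension d ≥ 2, and let N⁺ = ((d−1)√(d+1) − 1)/d. Then the set of density matrices ρ (d×d complex positive semidefinite matrices with trace 1) for which there exists an index j with Re tr(ρ Q_j) ≤ −N⁺ is finite and has at most d² elements. -/
/-!
The eigenvalues of a Hermitian `A` with `tr A = 1` and `tr A² = d` sum to `1` and their squares
to `d`, so by Samuelson's inequality they are all at least `-N⁺ = -maxNegativity d`, and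
Cauchy–Schwarz on the remaining `d - 2` of them shows that at most one attains this bound. In an
eigenbasis of `A`, a state with `Re tr(ρ A) ≤ -N⁺` is then supported on that single eigenvector,
which determines it. Hence each `Q j` accounts for at most one such state.
-/

open scoped ComplexOrder

noncomputable def maxNegativity (d : ℕ) : ℝ := (((d : ℝ) - 1) * Real.sqrt (d + 1) - 1) / d

section Samuelson

open Finset

variable {ι : Type*} [Fintype ι] (f : ι → ℝ)

/-- Samuelson's inequality. -/
theorem sq_card_mul_sub_sum_le (k : ι) :
    (Fintype.card ι * f k - ∑ i, f i) ^ 2 ≤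
      (Fintype.card ι - 1) * (Fintype.card ι * ∑ i, f i ^ 2 - (∑ i, f i) ^ 2) := by
  classical
  have hcs := sq_sum_le_card_mul_sum_sq (s := univ.erase k) (f := f)
  rw [sum_erase_eq_sub (mem_univ k), sum_erase_eq_sub (mem_univ k),
    card_erase_of_mem (mem_univ k), card_univ, Nat.cast_pred (Fintype.card_pos_iff.2 ⟨k⟩)] at hcs
  nlinarith [mul_le_mul_of_nonneg_left hcs (Nat.cast_nonneg (Fintype.card ι) : (0 : ℝ) ≤ _)]

variable {f} {d : ℕ}

theorem neg_maxNegativity_le (hcard : Fintype.card ι = d) (hsum : ∑ i, f i = 1)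
    (hsq : ∑ i, f i ^ 2 = d) (k : ι) : -maxNegativity d ≤ f k := by
  have hd : (1 : ℝ) ≤ d := by rw [← hcard]; exact_mod_cast Fintype.card_pos_iff.2 ⟨k⟩
  have h := sq_card_mul_sub_sum_le f k
  rw [hcard, hsum, hsq] at h
  have hs : Real.sqrt (d + 1) ^ 2 = d + 1 := Real.sq_sqrt (by positivity)
  have hbound := (abs_le_of_sq_le_sq' (a := d * f k - 1)
    (b := ((d : ℝ) - 1) * Real.sqrt (d + 1)) (by rw [mul_pow, hs]; nlinarith)
    (mul_nonneg (by linarith) (Real.sqrt_nonneg _))).1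
  rw [maxNegativity, neg_div', div_le_iff₀ (by linarith)]
  linarith

theorem eq_of_eq_neg_maxNegativity (hd : 2 ≤ d) (hcard : Fintype.card ι = d)
    (hsum : ∑ i, f i = 1) (hsq : ∑ i, f i ^ 2 = d) {k l : ι} (hk : f k = -maxNegativity d)
    (hl : f l = -maxNegativity d) : k = l := by
  classical
  by_contra hkl
  have hl' : l ∈ univ.erase k := mem_erase.2 ⟨Ne.symm hkl, mem_univ l⟩
  have hcs := sq_sum_le_card_mul_sum_sq (s := (univ.erase k).erase l) (f := f)
  rw [sum_erase_eq_sub hl', sum_erase_eq_sub hl', sum_erase_eq_sub (mem_univ k),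
    sum_erase_eq_sub (mem_univ k), card_erase_of_mem hl', card_erase_of_mem (mem_univ k),
    card_univ, hcard, hsum, hsq, hk, hl] at hcs
  have hd' : (2 : ℝ) ≤ d := by exact_mod_cast hd
  have hs : Real.sqrt (d + 1) ^ 2 = d + 1 := Real.sq_sqrt (by positivity)
  have hN : d * maxNegativity d = (d - 1) * Real.sqrt (d + 1) - 1 := by
    rw [maxNegativity]; field_simp
  have hcast : ((d - 1 - 1 : ℕ) : ℝ) = d - 2 := by
    rw [Nat.cast_sub (by omega), Nat.cast_sub (by omega)]; push_cast; ring
  rw [hcast] at hcs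
  have hd2 : (d + 2 * (d * maxNegativity d)) ^ 2 ≤
      (d - 2) * (d ^ 3 - 2 * (d * maxNegativity d) ^ 2) := by
    nlinarith [mul_le_mul_of_nonneg_left hcs (sq_nonneg (d : ℝ))]
  rw [hN] at hd2
  have hsqrt : ((d - 1) * Real.sqrt (d + 1)) ^ 2 = ((d : ℝ) - 1) ^ 2 * (d + 1) := by
    rw [mul_pow, hs]
  nlinarith [mul_pos (mul_pos (by linarith : (0 : ℝ) < d) (by linarith : (0 : ℝ) < d - 1))
    (by linarith : (0 : ℝ) < d + 1)]

end Samuelson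

namespace Matrix

open Unitary

variable {n 𝕜 : Type*} [Fintype n] [DecidableEq n] [RCLike 𝕜]

theorem trace_conjStarAlgAut (u : unitary (Matrix n n 𝕜)) (M : Matrix n n 𝕜) :
    (conjStarAlgAut 𝕜 _ u M).trace = M.trace := by
  rw [conjStarAlgAut_apply, trace_mul_cycle, coe_star_mul_self, one_mul]

theorem PosSemidef.conjStarAlgAut {M : Matrix n n 𝕜} (hM : M.PosSemidef)
    (u : unitary (Matrix n n 𝕜)) : (conjStarAlgAut 𝕜 _ u M).PosSemidef := by
  rw [conjStarAlgAut_apply, star_eq_conjTranspose]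
  exact hM.mul_mul_conjTranspose_same _

theorem PosSemidef.apply_eq_zero_of_apply_self_eq_zero {M : Matrix n n 𝕜}
    (hM : M.PosSemidef) {k : n} (hk : M k k = 0) (i : n) : M i k = 0 := by
  have h := (hM.dotProduct_mulVec_zero_iff (Pi.single k 1)).1 (by simp [hk])
  simpa using congrFun h i

theorem PosSemidef.mul_diagonal_eq_zero {M : Matrix n n 𝕜} (hM : M.PosSemidef)
    {w : n → ℝ} (hw : 0 ≤ w) (h : RCLike.re (M * diagonal (RCLike.ofReal ∘ w)).trace ≤ 0) :
    M * diagonal (RCLike.ofReal ∘ w) = 0 := by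
  have hterm : ∀ k, 0 ≤ RCLike.re (M k k) * w k := fun k =>
    mul_nonneg (RCLike.nonneg_iff.1 hM.diag_nonneg).1 (hw k)
  have hzero : ∀ k, RCLike.re (M k k) * w k = 0 := by
    have : ∑ k, RCLike.re (M k k) * w k = 0 := by
      refine le_antisymm ?_ (Finset.sum_nonneg fun k _ => hterm k)
      simpa [trace, mul_diagonal, map_sum] using h
    exact fun k =>
      (Finset.sum_eq_zero_iff_of_nonneg fun k _ => hterm k).1 this k (Finset.mem_univ k)
  ext i k
  rcases mul_eq_zero.1 (hzero k) with hre | hwk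
  · have hkk : M k k = 0 :=
      RCLike.ext (by simpa using hre) (by simpa using (RCLike.nonneg_iff.1 hM.diag_nonneg).2)
    simp [mul_diagonal, hM.apply_eq_zero_of_apply_self_eq_zero hkk i]
  · simp [mul_diagonal, hwk]

theorem IsHermitian.eq_of_mul_diagonal_eq_zero {M N : Matrix n n 𝕜}
    (hM : M.IsHermitian) (hN : N.IsHermitian) (htr : M.trace = N.trace) {w : n → 𝕜}
    (hw : ∀ k l, w k = 0 → w l = 0 → k = l) (hMw : M * diagonal w = 0)
    (hNw : N * diagonal w = 0) : M = N := by
  have support : ∀ P : Matrix n n 𝕜, P.IsHermitian → P * diagonal w = 0 →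
      ∀ i j, P i j ≠ 0 → w i = 0 ∧ w j = 0 := by
    intro P hP hPw i j hij
    have hcol : ∀ i k, P i k * w k = 0 := fun i k => by
      simpa [mul_diagonal] using congrFun (congrFun hPw i) k
    refine ⟨?_, (mul_eq_zero.1 (hcol i j)).resolve_left hij⟩
    refine (mul_eq_zero.1 (hcol j i)).resolve_left fun hji => hij ?_
    rw [← hP.apply, hji, star_zero]
  have diag_eq_trace : ∀ P : Matrix n n 𝕜, P.IsHermitian → P * diagonal w = 0 →
      ∀ i, w i = 0 → P i i = P.trace := by
    intro P hP hPw i hi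
    rw [trace, Finset.sum_eq_single i (fun k _ hki => ?_) (absurd (Finset.mem_univ i)),
      diag_apply]
    by_contra hk
    exact hki (hw k i (support P hP hPw k k hk).1 hi)
  ext i j
  by_cases hij : w i = 0 ∧ w j = 0
  · obtain rfl := hw i j hij.1 hij.2
    rw [diag_eq_trace M hM hMw i hij.1, diag_eq_trace N hN hNw i hij.1, htr]
  · rw [not_imp_comm.1 (support M hM hMw i j) hij, not_imp_comm.1 (support N hN hNw i j) hij]

theorem IsHermitian.trace_mul_self_eq_sum_sq_eigenvalues_s6 {A : Matrix n n 𝕜}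
    (hA : A.IsHermitian) :
    (A * A).trace = ∑ i, (hA.eigenvalues i : 𝕜) ^ 2 := by
  rw [← trace_conjStarAlgAut (star hA.eigenvectorUnitary), map_mul,
    hA.conjStarAlgAut_star_eigenvectorUnitary, diagonal_mul_diagonal, trace_diagonal]
  simp [sq]

theorem IsHermitian.subsingleton_setOf_re_trace_mul_le_neg_maxNegativity {d : ℕ} (hd : 2 ≤ d)
    (hcard : Fintype.card n = d) {A : Matrix n n 𝕜} (hA : A.IsHermitian) (htr : A.trace = 1)
    (htr_sq : (A * A).trace = d) :
    {ρ : Matrix n n 𝕜 | ρ.PosSemidef ∧ ρ.trace = 1 ∧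
      RCLike.re (ρ * A).trace ≤ -maxNegativity d}.Subsingleton := by
  set φ := conjStarAlgAut 𝕜 (Matrix n n 𝕜) (star hA.eigenvectorUnitary)
  have hφtr : ∀ M, (φ M).trace = M.trace := trace_conjStarAlgAut _
  have hsum : ∑ i, hA.eigenvalues i = 1 := by
    exact_mod_cast hA.trace_eq_sum_eigenvalues.symm.trans htr
  have hsq : ∑ i, hA.eigenvalues i ^ 2 = d := by
    exact_mod_cast hA.trace_mul_self_eq_sum_sq_eigenvalues_s6.symm.trans htr_sq
  set w : n → ℝ := fun k => hA.eigenvalues k + maxNegativity d with hw_def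
  have hw : 0 ≤ w := fun k => neg_le_iff_add_nonneg.1 (neg_maxNegativity_le hcard hsum hsq k)
  have hw_zero : ∀ k l, (RCLike.ofReal ∘ w : n → 𝕜) k = 0 →
      (RCLike.ofReal ∘ w : n → 𝕜) l = 0 → k = l := by
    intro k l hk hl
    simp only [Function.comp_apply, RCLike.ofReal_eq_zero, hw_def] at hk hl
    exact eq_of_eq_neg_maxNegativity hd hcard hsum hsq (eq_neg_of_add_eq_zero_left hk)
      (eq_neg_of_add_eq_zero_left hl)
  have hdiag : diagonal (RCLike.ofReal ∘ w) = φ A + (maxNegativity d : 𝕜) • 1 := by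
    rw [hA.conjStarAlgAut_star_eigenvectorUnitary, smul_one_eq_diagonal, diagonal_add]
    congr 1; ext k; simp [hw_def]
  have key : ∀ ρ : Matrix n n 𝕜, ρ.PosSemidef → ρ.trace = 1 →
      RCLike.re (ρ * A).trace ≤ -maxNegativity d → φ ρ * diagonal (RCLike.ofReal ∘ w) = 0 := by
    intro ρ hρ htrρ hneg
    refine (hρ.conjStarAlgAut _).mul_diagonal_eq_zero hw ?_
    rw [hdiag, mul_add, ← map_mul, trace_add, hφtr, Matrix.mul_smul, mul_one, trace_smul, hφtr,
      htrρ]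
    simp only [smul_eq_mul, mul_one, map_add, RCLike.ofReal_re]
    linarith
  rintro ρ₁ ⟨hρ₁, htr₁, hneg₁⟩ ρ₂ ⟨hρ₂, htr₂, hneg₂⟩
  refine φ.injective <| IsHermitian.eq_of_mul_diagonal_eq_zero (M := φ ρ₁) (N := φ ρ₂)
    (hρ₁.conjStarAlgAut _).isHermitian (hρ₂.conjStarAlgAut _).isHermitian
    (by rw [hφtr, hφtr, htr₁, htr₂]) hw_zero (key ρ₁ hρ₁ htr₁ hneg₁) (key ρ₂ hρ₂ htr₂ hneg₂)

end Matrix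

theorem stmt_6_general (d : ℕ) (hd : 2 ≤ d)
    (Q : Fin (d ^ 2) → Matrix (Fin d) (Fin d) ℂ)
    (hherm : ∀ j, (Q j).IsHermitian)
    (htr : ∀ j, (Q j).trace = 1)
    (hpair : ∀ j k, (Q j * Q k).trace = if j = k then (d : ℂ) else 0) :
    {ρ : Matrix (Fin d) (Fin d) ℂ | ρ.PosSemidef ∧ ρ.trace = 1 ∧
        ∃ j, ((ρ * Q j).trace).re ≤ -((((d : ℝ) - 1) * Real.sqrt (d + 1) - 1) / d)}.Finite ∧
      {ρ : Matrix (Fin d) (Fin d) ℂ | ρ.PosSemidef ∧ ρ.trace = 1 ∧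
        ∃ j, ((ρ * Q j).trace).re ≤
          -((((d : ℝ) - 1) * Real.sqrt (d + 1) - 1) / d)}.ncard ≤ d ^ 2 := by
  set T : Fin (d ^ 2) → Set (Matrix (Fin d) (Fin d) ℂ) := fun j =>
    {ρ | ρ.PosSemidef ∧ ρ.trace = 1 ∧ ((ρ * Q j).trace).re ≤ -maxNegativity d}
  have hT : ∀ j, (T j).Subsingleton := fun j =>
    (hherm j).subsingleton_setOf_re_trace_mul_le_neg_maxNegativity hd (Fintype.card_fin d) (htr j)
      (by simpa using hpair j j)
  have hunion : {ρ : Matrix (Fin d) (Fin d) ℂ | ρ.PosSemidef ∧ ρ.trace = 1 ∧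
      ∃ j, ((ρ * Q j).trace).re ≤ -((((d : ℝ) - 1) * Real.sqrt (d + 1) - 1) / d)} = ⋃ j, T j := by
    ext ρ
    simp only [Set.mem_ofPred_eq, Set.mem_iUnion, T, maxNegativity, exists_and_left]
  rw [hunion]
  refine ⟨Set.finite_iUnion fun j => (hT j).finite, ?_⟩
  calc (⋃ j, T j).ncard ≤ ∑ j, (T j).ncard := Set.ncard_iUnion_le_of_fintype T
    _ ≤ ∑ _j : Fin (d ^ 2), 1 := Finset.sum_le_sum fun j _ =>
      (Set.ncard_le_one_iff_eq (hT j).finite).2 (hT j).eq_empty_or_singleton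
    _ = d ^ 2 := by simp

/-- For any NQPR `Q` in dimension `d ≥ 2`, with `N⁺ = ((d−1)√(d+1) − 1)/d`, the
set of density matrices `ρ` for which some `j` satisfies `Re tr(ρ Q j) ≤ −N⁺` is finite with at
most `d²` elements. -/
theorem stmt_6 (d : ℕ) (hd : 2 ≤ d)
    (Q : Fin (d ^ 2) → Matrix (Fin d) (Fin d) ℂ)
    (hherm : ∀ j, (Q j).IsHermitian)
    (htr : ∀ j, (Q j).trace = 1)
    (hpair : ∀ j k, (Q j * Q k).trace = if j = k then (d : ℂ) else 0)
    (hsum : ∑ j, Q j = (d : ℂ) • (1 : Matrix (Fin d) (Fin d) ℂ)) :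
    {ρ : Matrix (Fin d) (Fin d) ℂ | ρ.PosSemidef ∧ ρ.trace = 1 ∧
        ∃ j, ((ρ * Q j).trace).re ≤ -((((d : ℝ) - 1) * Real.sqrt (d + 1) - 1) / d)}.Finite ∧
      {ρ : Matrix (Fin d) (Fin d) ℂ | ρ.PosSemidef ∧ ρ.trace = 1 ∧
        ∃ j, ((ρ * Q j).trace).re ≤
          -((((d : ℝ) - 1) * Real.sqrt (d + 1) - 1) / d)}.ncard ≤ d ^ 2 :=
  stmt_6_general d hd Q hherm htr hpair
end

section
/- Let d ≥ 1 and let v, w : Fin d → ℝ satisfy ∑_i v_i = ∑_i w_i = 1 and ∑_i v_i² = ∑_i w_i² = d, with v monotonically nondecreasing and w monotonically nonincreasing. Then ∑_{i} v_i·w_i ≥ −d + 2/d. -/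
/-- If `v, w : Fin d → ℝ` (with `d ≥ 1`) both sum to `1`, both have sum of squares
equal to `d`, `v` is nondecreasing and `w` is nonincreasing, then `∑ v i · w i ≥ −d + 2/d`. -/
theorem stmt_9 (d : ℕ) (hd : 1 ≤ d) (v w : Fin d → ℝ)
    (hv1 : ∑ i, v i = 1) (hw1 : ∑ i, w i = 1)
    (hv2 : ∑ i, v i ^ 2 = d) (hw2 : ∑ i, w i ^ 2 = d)
    (hvm : Monotone v) (hwm : Antitone w) :
    -(d : ℝ) + 2 / d ≤ ∑ i, v i * w i := by
  have hd0 : (0:ℝ) < d := by exact_mod_cast hd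
  have hcard : (Finset.univ : Finset (Fin d)).card = d := by simp
  have key := Finset.sum_mul_sq_le_sq_mul_sq Finset.univ
    (fun i => v i - 1/d) (fun i => w i - 1/d)
  have expand : ∀ (f : Fin d → ℝ), ∑ i, f i = 1 → ∑ i, f i ^ 2 = d →
      ∑ i, (f i - 1/d) ^ 2 = (d:ℝ) - 1/d := by
    intro f h1 h2
    have : ∑ i, (f i - 1/d) ^ 2
        = (∑ i, f i ^ 2) - (2/d) * (∑ i, f i) + d * (1/d)^2 := by
      rw [Finset.mul_sum, ← Finset.sum_sub_distrib]
      rw [show (d:ℝ) * (1/d)^2 = ∑ _i : Fin d, (1/d:ℝ)^2 by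
        rw [Finset.sum_const, hcard, nsmul_eq_mul]]
      rw [← Finset.sum_add_distrib]
      congr 1; funext i; ring
    rw [this, h1, h2]
    field_simp
    ring
  have ha := expand v hv1 hv2
  have hb := expand w hw1 hw2
  have hab : ∑ i, (v i - 1/d) * (w i - 1/d) = (∑ i, v i * w i) - 1/d := by
    have : ∑ i, (v i - 1/d) * (w i - 1/d)
        = (∑ i, v i * w i) - (1/d) * (∑ i, v i) - (1/d) * (∑ i, w i)
          + d * (1/d)^2 := by
      rw [Finset.mul_sum, Finset.mul_sum, ← Finset.sum_sub_distrib,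
        ← Finset.sum_sub_distrib]
      rw [show (d:ℝ) * (1/d)^2 = ∑ _i : Fin d, (1/d:ℝ)^2 by
        rw [Finset.sum_const, hcard, nsmul_eq_mul]]
      rw [← Finset.sum_add_distrib]
      congr 1; funext i; ring
    rw [this, hv1, hw1]
    field_simp
    ring
  rw [ha, hb, hab] at key
  have hC : (0:ℝ) ≤ (d:ℝ) - 1/d := by
    have : (1:ℝ) ≤ d := by exact_mod_cast hd
    have h1 : 1/(d:ℝ) ≤ 1 := by
      rw [div_le_one hd0]; exact this
    linarith
  rw [show ((d:ℝ) - 1/d) * ((d:ℝ) - 1/d) = ((d:ℝ) - 1/d)^2 by ring] at key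
  have h1 := (abs_le_of_sq_le_sq' key hC).1
  have h2d : 2/(d:ℝ) = 1/d + 1/d := by ring
  linarith
end

section
/- Let d ≥ 1. Let Λ be a linear map from d×d complex matrices to d×d complex matrices that is positive (it maps positive semidefinite matrices to positive semidefinite matrices) and trace-preserving (tr Λ(A) = tr A for all A). Let P and R be d×d Hermitian matrices with tr(R) = 1. Then Re tr(P · Λ(R)) ≥ (1/2)·[λ_min(P)·(‖R‖₁ + 1) − λ_max(P)·(‖R‖₁ − 1)], where ‖R‖₁ denotes the sum of the absolute values of the eigenvalues of R, and λ_min(P), λ_max(P) denote the minimal and maximal eigenvalues of P. -/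
open scoped ComplexOrder MatrixOrder

/-!
Split `R = R⁺ - R⁻` into positive and negative parts, so that `tr R⁺ + tr R⁻ = ‖R‖₁` and
`tr R⁺ - tr R⁻ = tr R = 1`. Since `Λ` is positive and trace preserving, `Λ R⁺` and `Λ R⁻` are
positive semidefinite with the same traces, and the Loewner bounds
`λ_min(P) • 1 ≤ P ≤ λ_max(P) • 1` give `λ_min(P) tr R⁺ ≤ Re tr(P Λ R⁺)` and
`Re tr(P Λ R⁻) ≤ λ_max(P) tr R⁻`.
-/

namespace Matrix

variable {n 𝕜 : Type*} [Fintype n] [RCLike 𝕜]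

theorem PosSemidef.trace_mul_nonneg {A B : Matrix n n 𝕜} (hA : A.PosSemidef)
    (hB : B.PosSemidef) : 0 ≤ (A * B).trace := by
  classical
  obtain ⟨C, rfl⟩ := CStarAlgebra.nonneg_iff_eq_star_mul_self.mp hB.nonneg
  rw [← Matrix.mul_assoc, trace_mul_cycle, star_eq_conjTranspose]
  exact (hA.mul_mul_conjTranspose_same C).trace_nonneg

theorem trace_mul_le_trace_mul_of_le {A B σ : Matrix n n 𝕜} (hAB : A ≤ B)
    (hσ : σ.PosSemidef) : (A * σ).trace ≤ (B * σ).trace := by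
  rw [← sub_nonneg, ← Matrix.trace_sub, ← Matrix.sub_mul]
  exact (le_iff.mp hAB).trace_mul_nonneg hσ

variable [DecidableEq n]

theorem IsHermitian.algebraMap_le_iff_le_eigenvalues {A : Matrix n n 𝕜} (hA : A.IsHermitian)
    {c : ℝ} : algebraMap ℝ _ c ≤ A ↔ ∀ i, c ≤ hA.eigenvalues i := by
  rw [algebraMap_le_iff_le_spectrum hA.isSelfAdjoint, hA.spectrum_real_eq_range_eigenvalues]
  simp

theorem IsHermitian.le_algebraMap_iff_eigenvalues_le {A : Matrix n n 𝕜} (hA : A.IsHermitian)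
    {c : ℝ} : A ≤ algebraMap ℝ _ c ↔ ∀ i, hA.eigenvalues i ≤ c := by
  rw [le_algebraMap_iff_spectrum_le hA.isSelfAdjoint, hA.spectrum_real_eq_range_eigenvalues]
  simp

theorem trace_algebraMap_mul (c : ℝ) (σ : Matrix n n 𝕜) :
    (algebraMap ℝ (Matrix n n 𝕜) c * σ).trace = c • σ.trace := by
  rw [Algebra.algebraMap_eq_smul_one, smul_mul_assoc, Matrix.one_mul, trace_smul]

theorem IsHermitian.trace_cfc_s10 {A : Matrix n n 𝕜} (hA : A.IsHermitian) (f : ℝ → ℝ) :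
    (cfc f A).trace = ∑ i, (f (hA.eigenvalues i) : 𝕜) := by
  rw [hA.cfc_eq, IsHermitian.cfc, Unitary.conjStarAlgAut_apply, trace_mul_cycle,
    Unitary.coe_star_mul_self, Matrix.one_mul, trace_diagonal]
  rfl

theorem IsHermitian.trace_posPart {A : Matrix n n 𝕜} (hA : A.IsHermitian) :
    (A⁺).trace = ∑ i, (((hA.eigenvalues i)⁺ : ℝ) : 𝕜) := by
  rw [CFC.posPart_def, cfcₙ_eq_cfc, hA.trace_cfc_s10]

theorem IsHermitian.trace_negPart {A : Matrix n n 𝕜} (hA : A.IsHermitian) :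
    (A⁻).trace = ∑ i, (((hA.eigenvalues i)⁻ : ℝ) : 𝕜) := by
  rw [CFC.negPart_def, cfcₙ_eq_cfc, hA.trace_cfc_s10]

theorem mul_re_trace_le_re_trace_mul_of_algebraMap_le {A σ : Matrix n n 𝕜} {c : ℝ}
    (hA : algebraMap ℝ _ c ≤ A) (hσ : σ.PosSemidef) :
    c * RCLike.re σ.trace ≤ RCLike.re (A * σ).trace := by
  simpa [trace_algebraMap_mul, RCLike.real_smul_eq_coe_mul] using
    RCLike.re_le_re (trace_mul_le_trace_mul_of_le hA hσ)

theorem re_trace_mul_le_mul_re_trace_of_le_algebraMap {A σ : Matrix n n 𝕜} {c : ℝ}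
    (hA : A ≤ algebraMap ℝ _ c) (hσ : σ.PosSemidef) :
    RCLike.re (A * σ).trace ≤ c * RCLike.re σ.trace := by
  simpa [trace_algebraMap_mul, RCLike.real_smul_eq_coe_mul] using
    RCLike.re_le_re (trace_mul_le_trace_mul_of_le hA hσ)

end Matrix

theorem stmt_10_general (d : ℕ)
    (Λ : Matrix (Fin d) (Fin d) ℂ →ₗ[ℂ] Matrix (Fin d) (Fin d) ℂ)
    (hpos : ∀ A : Matrix (Fin d) (Fin d) ℂ, A.PosSemidef → (Λ A).PosSemidef)
    (htp : ∀ A : Matrix (Fin d) (Fin d) ℂ, (Λ A).trace = A.trace)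
    (P R : Matrix (Fin d) (Fin d) ℂ)
    (hP : P.IsHermitian) (hR : R.IsHermitian) (hRtr : R.trace = 1) :
    (1 / 2 : ℝ) * ((⨅ i, hP.eigenvalues i) * ((∑ i, |hR.eigenvalues i|) + 1)
        - (⨆ i, hP.eigenvalues i) * ((∑ i, |hR.eigenvalues i|) - 1))
      ≤ ((P * Λ R).trace).re := by
  have hmin : algebraMap ℝ _ (⨅ i, hP.eigenvalues i) ≤ P :=
    hP.algebraMap_le_iff_le_eigenvalues.mpr (ciInf_le (Set.finite_range _).bddBelow)
  have hmax : P ≤ algebraMap ℝ _ (⨆ i, hP.eigenvalues i) :=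
    hP.le_algebraMap_iff_eigenvalues_le.mpr (le_ciSup (Set.finite_range _).bddAbove)
  have hsum : (R⁺).trace.re + (R⁻).trace.re = ∑ i, |hR.eigenvalues i| := by
    simp [hR.trace_posPart, hR.trace_negPart, ← Finset.sum_add_distrib, posPart_add_negPart]
  have hdiff : (R⁺).trace.re - (R⁻).trace.re = 1 := by
    rw [← Complex.sub_re, ← Matrix.trace_sub, CFC.posPart_sub_negPart R hR.isSelfAdjoint, hRtr,
      Complex.one_re]
  have hlow : (⨅ i, hP.eigenvalues i) * (R⁺).trace.re ≤ (P * Λ R⁺).trace.re := by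
    simpa [htp] using Matrix.mul_re_trace_le_re_trace_mul_of_algebraMap_le hmin
      (hpos _ (Matrix.nonneg_iff_posSemidef.mp (CFC.posPart_nonneg R)))
  have hhigh : (P * Λ R⁻).trace.re ≤ (⨆ i, hP.eigenvalues i) * (R⁻).trace.re := by
    simpa [htp] using Matrix.re_trace_mul_le_mul_re_trace_of_le_algebraMap hmax
      (hpos _ (Matrix.nonneg_iff_posSemidef.mp (CFC.negPart_nonneg R)))
  have hsplit : (P * Λ R).trace.re = (P * Λ R⁺).trace.re - (P * Λ R⁻).trace.re := by
    rw [← Complex.sub_re, ← Matrix.trace_sub, ← Matrix.mul_sub, ← map_sub,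
      CFC.posPart_sub_negPart R hR.isSelfAdjoint]
  rw [hsplit, ← hsum]
  linear_combination hlow + hhigh - ((⨅ i, hP.eigenvalues i) + (⨆ i, hP.eigenvalues i)) / 2 * hdiff

/-- If `Λ` is a positive trace-preserving linear map on `d×d` complex matrices,
`P` and `R` are Hermitian with `tr R = 1`, then
`Re tr(P·Λ(R)) ≥ (1/2)[λ_min(P)(‖R‖₁ + 1) − λ_max(P)(‖R‖₁ − 1)]`,
where `‖R‖₁` is the sum of the absolute values of the eigenvalues of `R`. -/
theorem stmt_10 (d : ℕ) (hd : 1 ≤ d)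
    (Λ : Matrix (Fin d) (Fin d) ℂ →ₗ[ℂ] Matrix (Fin d) (Fin d) ℂ)
    (hpos : ∀ A : Matrix (Fin d) (Fin d) ℂ, A.PosSemidef → (Λ A).PosSemidef)
    (htp : ∀ A : Matrix (Fin d) (Fin d) ℂ, (Λ A).trace = A.trace)
    (P R : Matrix (Fin d) (Fin d) ℂ)
    (hP : P.IsHermitian) (hR : R.IsHermitian) (hRtr : R.trace = 1) :
    (1 / 2 : ℝ) * ((⨅ i, hP.eigenvalues i) * ((∑ i, |hR.eigenvalues i|) + 1)
        - (⨆ i, hP.eigenvalues i) * ((∑ i, |hR.eigenvalues i|) - 1))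
      ≤ ((P * Λ R).trace).re :=
  stmt_10_general d Λ hpos htp P R hP hR hRtr
end

section
/- Let d ≥ 2 and let v : Fin d → ℝ satisfy ∑_j v_j = 1 and ∑_j v_j² = d. Writing v_max = max_j v_j, v_min = min_j v_j, and ‖v‖₁ = ∑_j |v_j|, one has (1/2)·[v_max·(‖v‖₁ − 1) + |v_min|·(‖v‖₁ + 1)] ≥ d − √(d+1) + (2/d)√(d+1) − 2/d, and equality holds if and only if v takes the value ((d−1)√(d+1) + 1)/d at exactly one coordinate and the value (1 − √(d+1))/d at the remaining d−1 coordinates. -/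
/-!
Let `M` and `m` be the largest and smallest coordinates. Coordinatewise
`2 v_j² ≤ M (|v_j| + v_j) - m (|v_j| - v_j)`, and summing shows that the left-hand side is at
least `d - (M + m)`; so it suffices to bound `M + m`. Two inequalities constrain the pair:
`∑ (M - v_j)(v_j - m) ≥ 0`, i.e. `d M m ≤ M + m - d`, and Cauchy–Schwarz on the other `d - 2`
coordinates, `(1 - M - m)² ≤ (d - 2)(d - M² - m²)`. A polynomial identity (`slack_identity`)
turns a nonnegative combination of the two slacks into `(d (M + m) - 2)² ≤ (d - 2)² (d + 1)`.
At equality both slacks vanish: the first makes `M`, `m` the roots of an explicit quadratic,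
the second makes the remaining coordinates equal, hence equal to `m`.
-/

open Finset

theorem Finset.sum_card_mul_sub_sum_sq {ι : Type*} (s : Finset ι) (f : ι → ℝ) :
    ∑ i ∈ s, (#s * f i - ∑ j ∈ s, f j) ^ 2 =
      #s * (#s * ∑ i ∈ s, f i ^ 2 - (∑ i ∈ s, f i) ^ 2) := by
  simp only [sub_sq, sum_add_distrib, sum_sub_distrib, mul_pow, ← mul_sum, ← sum_mul,
    sum_const, nsmul_eq_mul]
  ring

theorem Finset.card_mul_eq_sum_of_card_mul_sum_sq_eq {ι : Type*} {s : Finset ι} {f : ι → ℝ}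
    (h : #s * ∑ i ∈ s, f i ^ 2 = (∑ i ∈ s, f i) ^ 2) {i : ι} (hi : i ∈ s) :
    #s * f i = ∑ j ∈ s, f j := by
  have hzero : ∑ i ∈ s, (#s * f i - ∑ j ∈ s, f j) ^ 2 = 0 := by
    rw [sum_card_mul_sub_sum_sq, h, sub_self, mul_zero]
  have hterm := (sum_eq_zero_iff_of_nonneg fun i _ => sq_nonneg _).1 hzero i hi
  exact sub_eq_zero.1 (pow_eq_zero_iff two_ne_zero |>.1 hterm)

section Algebra

variable {n M m s : ℝ}

theorem slack_identity :
    (n - 1) * ((n - 2) ^ 2 * (n + 1) - (n * (M + m) - 2) ^ 2) =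
      n * (2 * (n - 2) * (M + m - n - n * (M * m)) +
        n * ((n - 2) * (n - M ^ 2 - m ^ 2) - (1 - M - m) ^ 2)) := by
  ring

theorem mul_add_sub_two_le (hn : 2 ≤ n) (hs : s ^ 2 = n + 1) (hs0 : 0 ≤ s)
    (hA : n * (M * m) ≤ M + m - n) (hB : (1 - M - m) ^ 2 ≤ (n - 2) * (n - M ^ 2 - m ^ 2)) :
    n * (M + m) - 2 ≤ (n - 2) * s := by
  have hslack : 0 ≤ (n - 1) * ((n - 2) ^ 2 * (n + 1) - (n * (M + m) - 2) ^ 2) := by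
    rw [slack_identity]
    have := mul_nonneg (sub_nonneg.2 hn) (sub_nonneg.2 hA)
    have := sub_nonneg.2 hB
    positivity
  have hsq : (n * (M + m) - 2) ^ 2 ≤ ((n - 2) * s) ^ 2 := by
    rw [mul_pow, hs]
    nlinarith
  exact (abs_le_of_sq_le_sq' hsq (by nlinarith)).2

theorem slack_eq_zero_of_mul_add_sub_two_eq (hn : 2 ≤ n) (hs : s ^ 2 = n + 1)
    (hA : n * (M * m) ≤ M + m - n) (hB : (1 - M - m) ^ 2 ≤ (n - 2) * (n - M ^ 2 - m ^ 2))
    (heq : n * (M + m) - 2 = (n - 2) * s) :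
    (n - 2) * (M + m - n - n * (M * m)) = 0 ∧
      (1 - M - m) ^ 2 = (n - 2) * (n - M ^ 2 - m ^ 2) := by
  have hzero : 2 * (n - 2) * (M + m - n - n * (M * m)) +
      n * ((n - 2) * (n - M ^ 2 - m ^ 2) - (1 - M - m) ^ 2) = 0 := by
    have h := (slack_identity (n := n) (M := M) (m := m)).symm
    rw [← hs, ← mul_pow, ← heq, sub_self, mul_zero] at h
    exact (mul_eq_zero.1 h).resolve_left (by linarith)
  have hA' := mul_nonneg (sub_nonneg.2 hn) (sub_nonneg.2 hA)
  have hB' := mul_nonneg (by linarith : (0 : ℝ) ≤ n) (sub_nonneg.2 hB)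
  constructor <;> nlinarith

theorem eq_of_mul_add_sub_two_eq (hn : 0 < n) (hs : s ^ 2 = n + 1) (hs0 : 0 ≤ s) (hmM : m ≤ M)
    (heq : n * (M + m) - 2 = (n - 2) * s) (hA : n * (M * m) = M + m - n) :
    M = ((n - 1) * s + 1) / n ∧ m = (1 - s) / n := by
  have hdiff : M - m = s := by
    refine (pow_left_inj₀ (sub_nonneg.2 hmM) hs0 two_ne_zero).1 ?_
    refine mul_left_cancel₀ (pow_ne_zero 2 hn.ne') ?_
    linear_combination (n * (M + m) - 2 + (n - 2) * s) * heq - 4 * n * hA +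
      ((n - 2) ^ 2 - n ^ 2) * hs
  constructor <;> rw [eq_div_iff hn.ne']
  · linear_combination (heq + n * hdiff) / 2
  · linear_combination (heq - n * hdiff) / 2

end Algebra

section Vector

variable {ι : Type*} [Fintype ι] {v : ι → ℝ}

theorem sum_compl_pair [DecidableEq ι] {i k : ι} (hik : i ≠ k) (f : ι → ℝ) :
    ∑ j ∈ {i, k}ᶜ, f j = ∑ j, f j - f i - f k := by
  rw [← sum_compl_add_sum {i, k} f, sum_pair hik]
  ring

theorem card_compl_pair [DecidableEq ι] {i k : ι} (hik : i ≠ k) :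
    (#({i, k} : Finset ι)ᶜ : ℝ) = Fintype.card ι - 2 := by
  rw [card_compl, card_pair hik, Nat.cast_sub]
  · norm_num
  · simpa [card_pair hik] using card_le_univ {i, k}

theorem sum_sub_sub_eq_zero_of_card_eq_two (h2 : Fintype.card ι = 2) {i k : ι} (hik : i ≠ k)
    (f : ι → ℝ) : ∑ j, f j - f i - f k = 0 := by
  classical
  have hempty : ({i, k} : Finset ι)ᶜ = ∅ := by
    rw [← card_eq_zero, card_compl, card_pair hik, h2]
  rw [← sum_compl_pair hik, hempty, sum_empty]

theorem sq_sum_sub_sub_le {i k : ι} (hik : i ≠ k) :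
    (∑ j, v j - v i - v k) ^ 2 ≤ (Fintype.card ι - 2) * (∑ j, v j ^ 2 - v i ^ 2 - v k ^ 2) := by
  classical
  rw [← sum_compl_pair hik, ← sum_compl_pair hik, ← card_compl_pair hik]
  exact sq_sum_le_card_mul_sum_sq

theorem card_sub_two_mul_eq_of_sq_sum_sub_sub_eq {i k : ι} (hik : i ≠ k)
    (h : (∑ l, v l - v i - v k) ^ 2 =
      (Fintype.card ι - 2) * (∑ l, v l ^ 2 - v i ^ 2 - v k ^ 2))
    {j : ι} (hji : j ≠ i) (hjk : j ≠ k) :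
    (Fintype.card ι - 2) * v j = ∑ l, v l - v i - v k := by
  classical
  rw [← sum_compl_pair hik, ← sum_compl_pair hik, ← card_compl_pair hik] at h
  rw [← sum_compl_pair hik, ← card_compl_pair hik]
  exact card_mul_eq_sum_of_card_mul_sum_sq_eq h.symm (by simp [hji, hjk])

theorem two_mul_sq_le {m M x : ℝ} (hm : m ≤ x) (hM : x ≤ M) :
    2 * x ^ 2 ≤ M * (|x| + x) - m * (|x| - x) := by
  rcases le_or_gt 0 x with hx | hx
  · rw [abs_of_nonneg hx]; nlinarith
  · rw [abs_of_neg hx]; nlinarith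

theorem two_mul_sum_sq_le {m M : ℝ} (hm : ∀ j, m ≤ v j) (hM : ∀ j, v j ≤ M) :
    2 * ∑ j, v j ^ 2 ≤ M * (∑ j, |v j| + ∑ j, v j) - m * (∑ j, |v j| - ∑ j, v j) := by
  rw [mul_sum, ← sum_add_distrib, ← sum_sub_distrib, mul_sum, mul_sum, ← sum_sub_distrib]
  exact sum_le_sum fun j _ => two_mul_sq_le (hm j) (hM j)

theorem card_mul_mul_le {m M : ℝ} (hm : ∀ j, m ≤ v j) (hM : ∀ j, v j ≤ M) :
    Fintype.card ι * (M * m) ≤ (M + m) * ∑ j, v j - ∑ j, v j ^ 2 := by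
  have h : 0 ≤ ∑ j, (M - v j) * (v j - m) :=
    sum_nonneg fun j _ => mul_nonneg (sub_nonneg.2 (hM j)) (sub_nonneg.2 (hm j))
  simp only [sub_mul, mul_sub, sum_sub_distrib, ← mul_sum, ← sum_mul, sum_const, card_univ,
    nsmul_eq_mul, ← sq] at h
  linarith

theorem sum_eq_add_mul_of_forall_ne {a b : ℝ} {j₀ : ι} (f : ι → ℝ) (h₀ : f j₀ = a)
    (h : ∀ j ≠ j₀, f j = b) : ∑ j, f j = a + (Fintype.card ι - 1) * b := by
  classical
  have hcard : (#({j₀} : Finset ι)ᶜ : ℝ) = Fintype.card ι - 1 := by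
    rw [card_compl, card_singleton, Nat.cast_sub (Fintype.card_pos_iff.2 ⟨j₀⟩), Nat.cast_one]
  rw [Fintype.sum_eq_add_sum_compl j₀, h₀, ← hcard, ← nsmul_eq_mul, ← sum_const]
  exact congrArg _ (sum_congr rfl fun j hj => h j (by simpa using hj))

theorem iSup_eq_and_iInf_eq_of_forall_ne [Nontrivial ι] {a b : ℝ} (hba : b ≤ a) {j₀ : ι}
    (h₀ : v j₀ = a) (h : ∀ j ≠ j₀, v j = b) : ⨆ j, v j = a ∧ ⨅ j, v j = b := by
  have hle : ∀ j, v j ≤ a := fun j => by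
    rcases eq_or_ne j j₀ with rfl | hj
    · exact h₀.le
    · exact (h j hj).trans_le hba
  have hge : ∀ j, b ≤ v j := fun j => by
    rcases eq_or_ne j j₀ with rfl | hj
    · exact h₀ ▸ hba
    · exact (h j hj).ge
  obtain ⟨j₁, hj₁⟩ := exists_ne j₀
  exact ⟨le_antisymm (ciSup_le hle) (h₀ ▸ le_ciSup (Finite.bddAbove_range v) j₀),
    le_antisymm (h j₁ hj₁ ▸ ciInf_le (Finite.bddBelow_range v) j₁) (le_ciInf hge)⟩

end Vector

section Extremal

variable {n : ℕ} {v : Fin n → ℝ} {i k : Fin n}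

theorem neg_of_forall_le (hn : 2 ≤ n) (hsum : ∑ j, v j = 1) (hsq : ∑ j, v j ^ 2 = n)
    (hk : ∀ j, v k ≤ v j) : v k < 0 := by
  by_contra! h
  have h1 := sum_sq_le_sq_sum_of_nonneg fun j (_ : j ∈ univ) => h.trans (hk j)
  have h2 : (2 : ℝ) ≤ n := by exact_mod_cast hn
  rw [hsum, hsq] at h1
  linarith

theorem pos_of_forall_le (hsum : ∑ j, v j = 1) (hi : ∀ j, v j ≤ v i) : 0 < v i := by
  obtain ⟨j, -, hj⟩ := exists_lt_of_sum_lt (f := fun _ => 0) (g := v) (s := univ) (by simp [hsum])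
  exact hj.trans_le (hi j)

theorem card_sub_le_half_mul (hn : 2 ≤ n) (hsum : ∑ j, v j = 1) (hsq : ∑ j, v j ^ 2 = n)
    (hi : ∀ j, v j ≤ v i) (hk : ∀ j, v k ≤ v j) :
    n - (v i + v k) ≤ 1 / 2 * (v i * (∑ j, |v j| - 1) + |v k| * (∑ j, |v j| + 1)) := by
  have h := two_mul_sum_sq_le hk hi
  rw [hsum, hsq] at h
  rw [abs_of_neg (neg_of_forall_le hn hsum hsq hk)]
  linear_combination h / 2

theorem card_mul_mul_le_and_sq_le (hsum : ∑ j, v j = 1) (hsq : ∑ j, v j ^ 2 = n) (hik : i ≠ k)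
    (hi : ∀ j, v j ≤ v i) (hk : ∀ j, v k ≤ v j) :
    n * (v i * v k) ≤ v i + v k - n ∧ (1 - v i - v k) ^ 2 ≤ (n - 2) * (n - v i ^ 2 - v k ^ 2) := by
  have hA := card_mul_mul_le hk hi
  have hB := sq_sum_sub_sub_le (v := v) hik
  rw [hsum, hsq, mul_one, Fintype.card_fin] at hA
  rw [hsum, hsq, Fintype.card_fin] at hB
  exact ⟨hA, hB⟩

theorem add_le_of_forall_le (hn : 2 ≤ n) (hsum : ∑ j, v j = 1) (hsq : ∑ j, v j ^ 2 = n)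
    (hik : i ≠ k) (hi : ∀ j, v j ≤ v i) (hk : ∀ j, v k ≤ v j) :
    v i + v k ≤ (2 + (n - 2) * √(n + 1)) / n := by
  obtain ⟨hA, hB⟩ := card_mul_mul_le_and_sq_le hsum hsq hik hi hk
  have hn' : (2 : ℝ) ≤ n := by exact_mod_cast hn
  rw [le_div_iff₀ (by linarith)]
  have := mul_add_sub_two_le hn' (Real.sq_sqrt (by linarith)) (Real.sqrt_nonneg _) hA hB
  linarith

theorem eq_of_add_eq_of_forall_le (hn : 2 ≤ n) (hsum : ∑ j, v j = 1) (hsq : ∑ j, v j ^ 2 = n)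
    (hik : i ≠ k) (hi : ∀ j, v j ≤ v i) (hk : ∀ j, v k ≤ v j)
    (heq : v i + v k = (2 + (n - 2) * √(n + 1)) / n) :
    v i = ((n - 1) * √(n + 1) + 1) / n ∧ ∀ j, j ≠ i → v j = (1 - √(n + 1)) / n := by
  have hn' : (2 : ℝ) ≤ n := by exact_mod_cast hn
  have hs : √(n + 1) ^ 2 = n + 1 := Real.sq_sqrt (by linarith)
  obtain ⟨hA, hB⟩ := card_mul_mul_le_and_sq_le hsum hsq hik hi hk
  have heq' : n * (v i + v k) - 2 = (n - 2) * √(n + 1) := by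
    rw [heq]; field_simp; ring
  obtain ⟨hA0, hB0⟩ := slack_eq_zero_of_mul_add_sub_two_eq hn' hs hA hB heq'
  have hA1 : n * (v i * v k) = v i + v k - n := by
    rcases hn.eq_or_lt with h2 | h3
    · -- the first slack carries the factor `n - 2`; instead use that `i`, `k` are all indices
      have hsq2 := sum_sub_sub_eq_zero_of_card_eq_two (by simp [h2]) hik (v · ^ 2)
      rw [hsq] at hsq2
      rw [← h2] at heq' hsq2 ⊢
      push_cast at heq' hsq2 ⊢
      linear_combination (v i + v k) / 2 * heq' + hsq2
    · have hn3 : (n : ℝ) - 2 ≠ 0 := by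
        have : (2 : ℝ) < n := by exact_mod_cast h3
        linarith
      linarith [(mul_eq_zero.1 hA0).resolve_left hn3]
  obtain ⟨hM, hm⟩ :=
    eq_of_mul_add_sub_two_eq (by linarith) hs (Real.sqrt_nonneg _) (hk i) heq' hA1
  refine ⟨hM, fun j hji => ?_⟩
  rcases eq_or_ne j k with rfl | hjk
  · exact hm
  have hn3 : (2 : ℝ) < n := by
    exact_mod_cast (Fintype.card_fin n) ▸ Fintype.two_lt_card_iff.2 ⟨j, i, k, hji, hjk, hik⟩
  have hj := card_sub_two_mul_eq_of_sq_sum_sub_sub_eq hik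
    (by rw [hsum, hsq, Fintype.card_fin]; exact hB0) hji hjk
  rw [hsum, Fintype.card_fin] at hj
  rw [eq_div_iff (by linarith)]
  refine mul_left_cancel₀ (sub_ne_zero.2 hn3.ne') ?_
  linear_combination n * hj - heq'

theorem half_mul_eq_of_forall_ne (hn : 2 ≤ n) {j₀ : Fin n}
    (h₀ : v j₀ = ((n - 1) * √(n + 1) + 1) / n) (h : ∀ j ≠ j₀, v j = (1 - √(n + 1)) / n) :
    1 / 2 * ((⨆ j, v j) * (∑ j, |v j| - 1) + |⨅ j, v j| * (∑ j, |v j| + 1)) =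
      n - √(n + 1) + 2 / n * √(n + 1) - 2 / n := by
  have hn' : (2 : ℝ) ≤ n := by exact_mod_cast hn
  have hs : √(n + 1) ^ 2 = n + 1 := Real.sq_sqrt (by linarith)
  have hs1 : 1 ≤ √(n + 1) := Real.one_le_sqrt.2 (by linarith)
  have hX : 0 ≤ ((n - 1) * √(n + 1) + 1) / n := div_nonneg (by nlinarith) (by linarith)
  have hY : (1 - √(n + 1)) / n ≤ 0 := div_nonpos_of_nonpos_of_nonneg (by linarith) (by linarith)
  have : Nontrivial (Fin n) := Fin.nontrivial_iff_two_le.2 hn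
  obtain ⟨hM, hm⟩ := iSup_eq_and_iInf_eq_of_forall_ne (hY.trans hX) h₀ h
  rw [hM, hm, sum_eq_add_mul_of_forall_ne (|v ·|) (congrArg abs h₀)
    (fun j hj => congrArg abs (h j hj)), abs_of_nonneg hX, abs_of_nonpos hY, Fintype.card_fin]
  field_simp
  linear_combination (2 * (n : ℝ) * (n - 1)) * hs

end Extremal

/-- Lemma S1: If `d ≥ 2` and `v : Fin d → ℝ` satisfies `∑ v j = 1` and
`∑ (v j)² = d`, then with `v_max = max_j v j`, `v_min = min_j v j`, `‖v‖₁ = ∑ |v j|`,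
`(1/2)[v_max(‖v‖₁ − 1) + |v_min|(‖v‖₁ + 1)] ≥ d − √(d+1) + (2/d)√(d+1) − 2/d`, with equality
iff `v` takes the value `((d−1)√(d+1)+1)/d` at exactly one coordinate and `(1 − √(d+1))/d`
elsewhere. -/
theorem stmt_12 (d : ℕ) (hd : 2 ≤ d) (v : Fin d → ℝ)
    (hsum : ∑ j, v j = 1) (hsq : ∑ j, v j ^ 2 = d) :
    ((d : ℝ) - Real.sqrt (d + 1) + (2 / d) * Real.sqrt (d + 1) - 2 / d ≤
      (1 / 2 : ℝ) * ((⨆ j, v j) * ((∑ j, |v j|) - 1) + |⨅ j, v j| * ((∑ j, |v j|) + 1))) ∧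
    ((1 / 2 : ℝ) * ((⨆ j, v j) * ((∑ j, |v j|) - 1) + |⨅ j, v j| * ((∑ j, |v j|) + 1)) =
        (d : ℝ) - Real.sqrt (d + 1) + (2 / d) * Real.sqrt (d + 1) - 2 / d ↔
      ∃ j₀, v j₀ = (((d : ℝ) - 1) * Real.sqrt (d + 1) + 1) / d ∧
        ∀ j, j ≠ j₀ → v j = (1 - Real.sqrt (d + 1)) / d) := by
  have htarget : (d : ℝ) - √(d + 1) + (2 / d) * √(d + 1) - 2 / d =
      d - (2 + (d - 2) * √(d + 1)) / d := by
    have hd0 : (d : ℝ) ≠ 0 := by norm_cast; omega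
    field_simp; ring
  have : Nonempty (Fin d) := ⟨⟨0, by omega⟩⟩
  obtain ⟨i, hi⟩ := exists_eq_ciSup_of_finite (f := v)
  obtain ⟨k, hk⟩ := exists_eq_ciInf_of_finite (f := v)
  have hvi : ∀ j, v j ≤ v i := fun j => hi ▸ le_ciSup (Finite.bddAbove_range v) j
  have hvk : ∀ j, v k ≤ v j := fun j => hk ▸ ciInf_le (Finite.bddBelow_range v) j
  have hik : i ≠ k := fun h =>
    (neg_of_forall_le hd hsum hsq hvk).not_gt (h ▸ pos_of_forall_le hsum hvi)
  have hlow := card_sub_le_half_mul hd hsum hsq hvi hvk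
  have hup := add_le_of_forall_le hd hsum hsq hik hvi hvk
  refine ⟨?_, fun heq => ?_, fun ⟨j₀, h₀, h⟩ => half_mul_eq_of_forall_ne hd h₀ h⟩
  · rw [← hi, ← hk]
    linarith
  · rw [← hi, ← hk] at heq
    exact ⟨i, eq_of_add_eq_of_forall_le hd hsum hsq hik hvi hvk (le_antisymm hup (by linarith))⟩
end

section
/- Let d ≥ 1 and let v : Fin d → ℝ satisfy ∑_j v_j = 1 and ∑_j v_j² = d. Then: (a) if d is odd, ∑_j |v_j| ≤ d, with equality if and only if v has (d+1)/2 components equal to 1 and (d−1)/2 components equal to −1; (b) if d is even, ∑_j |v_j| ≤ √(d² − 1), with equality if and only if v has d/2 components equal to (1 + √(d²−1))/d and d/2 components equal to (1 − √(d²−1))/d. -/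
lemma even_core (D eR pR nR t : ℝ)
    (hD : D = 2 * eR) (hd2 : 2 ≤ D) (hp : 1 ≤ pR) (hn : 0 ≤ nR) (hpn : pR + nR = D)
    (ht0 : 0 ≤ t) (hcase : pR ≤ eR ∨ eR + 1 ≤ pR)
    (hF : 0 ≤ 4 * pR * nR * D - (nR * (t + 1) ^ 2 + pR * (t - 1) ^ 2)) :
    t ^ 2 ≤ D ^ 2 - 1 := by
  have hDpos : 0 < D := by linarith
  have hDD : D ^ 2 = 2 * D * eR := by rw [hD]; ring
  have hD21 : 3 ≤ D ^ 2 - 1 := by nlinarith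
  have hid : D * (4 * pR * nR * D - (nR * (t + 1) ^ 2 + pR * (t - 1) ^ 2))
      = (D ^ 2 - 1) * (D ^ 2 - t ^ 2) - (2 * D * pR - D ^ 2 - t) ^ 2 := by
    have hnr : nR = D - pR := by linarith
    rw [hnr]; ring
  have hdF : 0 ≤ D * (4 * pR * nR * D - (nR * (t + 1) ^ 2 + pR * (t - 1) ^ 2)) :=
    mul_nonneg hDpos.le hF
  have h4 : 0 ≤ (D ^ 2 - 1) * (D ^ 2 - t ^ 2) := by
    linarith [hid, hdF, sq_nonneg (2 * D * pR - D ^ 2 - t)]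
  have ht2d : t ^ 2 ≤ D ^ 2 := by nlinarith [h4, hD21]
  have htd : t ≤ D := by nlinarith [ht2d, ht0, hDpos]
  have hXsq : t ^ 2 ≤ (2 * D * pR - D ^ 2 - t) ^ 2 := by
    rcases hcase with h | h
    · have hx : 2 * D * pR - D ^ 2 ≤ 0 := by
        linarith [mul_nonneg hDpos.le (sub_nonneg.2 h), hDD]
      linarith [mul_nonneg (neg_nonneg.2 hx) ht0, sq_nonneg (2 * D * pR - D ^ 2)]
    · have h' : (1:ℝ) ≤ pR - eR := by linarith
      have hx : 2 * D ≤ 2 * D * pR - D ^ 2 := by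
        have h2 := mul_le_mul_of_nonneg_left h' (by linarith : (0:ℝ) ≤ 2 * D)
        rw [mul_one] at h2
        linarith [hDD]
      have h1 : (0:ℝ) ≤ 2 * D * pR - D ^ 2 := by linarith
      have h2 : (0:ℝ) ≤ 2 * D * pR - D ^ 2 - 2 * t := by linarith
      linarith [mul_nonneg h1 h2]
  have h5 : t ^ 2 ≤ (D ^ 2 - 1) * (D ^ 2 - t ^ 2) := by linarith [hid, hdF, hXsq]
  by_contra hcon
  push_neg at hcon
  have h6 : (D ^ 2 - 1) * (D ^ 2 - t ^ 2) ≤ (D ^ 2 - 1) * 1 :=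
    mul_le_mul_of_nonneg_left (by linarith) (by linarith)
  linarith [h5, h6]

lemma even_core_eq (D eR pR nR t : ℝ)
    (hD : D = 2 * eR) (hd2 : 2 ≤ D) (hp : 1 ≤ pR) (hn : 0 ≤ nR) (hpn : pR + nR = D)
    (ht1 : 1 < t) (htd : t < D) (ht2 : t ^ 2 = D ^ 2 - 1)
    (hcase : pR ≤ eR ∨ eR + 1 ≤ pR)
    (hF : 0 ≤ 4 * pR * nR * D - (nR * (t + 1) ^ 2 + pR * (t - 1) ^ 2)) :
    pR = eR ∧ 4 * pR * nR * D - (nR * (t + 1) ^ 2 + pR * (t - 1) ^ 2) = 0 := by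
  have hDpos : 0 < D := by linarith
  have ht0 : 0 ≤ t := by linarith
  have hDD : D ^ 2 = 2 * D * eR := by rw [hD]; ring
  have hid : D * (4 * pR * nR * D - (nR * (t + 1) ^ 2 + pR * (t - 1) ^ 2))
      = (D ^ 2 - 1) * (D ^ 2 - t ^ 2) - (2 * D * pR - D ^ 2 - t) ^ 2 := by
    have hnr : nR = D - pR := by linarith
    rw [hnr]; ring
  have hdF : 0 ≤ D * (4 * pR * nR * D - (nR * (t + 1) ^ 2 + pR * (t - 1) ^ 2)) :=
    mul_nonneg hDpos.le hF
  have hprod : (D ^ 2 - 1) * (D ^ 2 - t ^ 2) = D ^ 2 - 1 := by rw [ht2]; ring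
  have hpe : pR = eR := by
    rcases hcase with h | h
    · have hxle : 2 * D * pR - D ^ 2 ≤ 0 := by
        linarith [mul_nonneg hDpos.le (sub_nonneg.2 h), hDD]
      have hXsq : t ^ 2 ≤ (2 * D * pR - D ^ 2 - t) ^ 2 := by
        linarith [mul_nonneg (neg_nonneg.2 hxle) ht0, sq_nonneg (2 * D * pR - D ^ 2)]
      have hX2 : (2 * D * pR - D ^ 2 - t) ^ 2 = t ^ 2 := by
        have hle : (2 * D * pR - D ^ 2 - t) ^ 2 ≤ t ^ 2 := by
          linarith [hid, hdF, hprod, ht2]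
        linarith [hXsq]
      -- x ≤ 0, (x - t)^2 = t^2, t > 1 forces x = 0
      have hx0 : 2 * D * pR - D ^ 2 = 0 := by
        by_contra hne
        have hxlt : 2 * D * pR - D ^ 2 < 0 := lt_of_le_of_ne hxle hne
        have := mul_pos (neg_pos.2 hxlt) (by linarith : (0:ℝ) < t)
        nlinarith [hX2, sq_nonneg (2 * D * pR - D ^ 2)]
      have h1 : 2 * D * (pR - eR) = 0 := by
        have expand : 2 * D * (pR - eR) = (2 * D * pR - D ^ 2) + (D ^ 2 - 2 * D * eR) := by
          ring
        rw [expand, hx0, hDD]; ring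
      rcases mul_eq_zero.1 h1 with h' | h'
      · exact absurd h' (by positivity)
      · linarith
    · exfalso
      have h' : (1:ℝ) ≤ pR - eR := by linarith
      have hx : 2 * D ≤ 2 * D * pR - D ^ 2 := by
        have h2 := mul_le_mul_of_nonneg_left h' (by linarith : (0:ℝ) ≤ 2 * D)
        rw [mul_one] at h2
        linarith [hDD]
      have h1 : (0:ℝ) < 2 * D * pR - D ^ 2 - t - t := by linarith
      have h2 : (0:ℝ) < 2 * D * pR - D ^ 2 - t + t := by linarith
      have hX2 : (2 * D * pR - D ^ 2 - t) ^ 2 ≤ t ^ 2 := by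
        linarith [hid, hdF, hprod, ht2]
      nlinarith [mul_pos h1 h2, hX2]
  refine ⟨hpe, ?_⟩
  have hXe : 2 * D * pR - D ^ 2 - t = -t := by
    rw [hpe]; linarith [hDD]
  have hDF0 : D * (4 * pR * nR * D - (nR * (t + 1) ^ 2 + pR * (t - 1) ^ 2)) = 0 := by
    rw [hid, hXe, hprod]
    linarith [ht2]
  rcases mul_eq_zero.1 hDF0 with h' | h'
  · exact absurd h' (ne_of_gt hDpos)
  · exact h'

lemma slack_zero (pR nR u w : ℝ) (hp : 1 ≤ pR) (hn : 1 ≤ nR) (hu : 0 ≤ u) (hw : 0 ≤ w)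
    (h : nR * u + pR * w = 0) : u = 0 ∧ w = 0 := by
  have h1 : 0 ≤ (nR - 1) * u := mul_nonneg (by linarith) hu
  have h2 : 0 ≤ (pR - 1) * w := mul_nonneg (by linarith) hw
  constructor <;> linarith [h1, h2]



lemma eq_const_of_sq_sum_eq {ι : Type*} (S : Finset ι) (f : ι → ℝ) (c : ℝ)
    (hc : (S.card : ℝ) * c = ∑ i ∈ S, f i)
    (h : (∑ i ∈ S, f i) ^ 2 = (S.card : ℝ) * ∑ i ∈ S, f i ^ 2) :
    ∀ j ∈ S, f j = c := by
  have expand : ∑ i ∈ S, (f i - c) ^ 2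
      = ∑ i ∈ S, f i ^ 2 - 2 * c * (∑ i ∈ S, f i) + (S.card : ℝ) * c ^ 2 := by
    rw [Finset.sum_congr rfl (fun i _ => by ring :
      ∀ i ∈ S, (f i - c) ^ 2 = f i ^ 2 - 2 * c * f i + c ^ 2)]
    rw [Finset.sum_add_distrib, Finset.sum_sub_distrib, ← Finset.mul_sum,
      Finset.sum_const, nsmul_eq_mul]
  rcases S.eq_empty_or_nonempty with rfl | hne
  · simp
  · have hcard : 0 < (S.card : ℝ) := by exact_mod_cast Finset.card_pos.2 hne
    have h2 : (S.card : ℝ) * ∑ i ∈ S, (f i - c) ^ 2 = 0 := by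
      rw [expand]
      linear_combination (-1 : ℝ) * h + ((S.card : ℝ) * c - ∑ i ∈ S, f i) * hc
    have hz : ∑ i ∈ S, (f i - c) ^ 2 = 0 := by
      rcases mul_eq_zero.1 h2 with h' | h'
      · exact absurd h' (ne_of_gt hcard)
      · exact h'
    intro j hj
    have := (Finset.sum_eq_zero_iff_of_nonneg (fun i _ => sq_nonneg (f i - c))).1 hz j hj
    have : f j - c = 0 := by nlinarith [this]
    linarith

set_option maxHeartbeats 1000000 in
/-- Lemma S2: If `d ≥ 1` and `v : Fin d → ℝ` satisfies `∑ v j = 1` and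
`∑ (v j)² = d`, then: (a) if `d` is odd, `∑ |v j| ≤ d`, with equality iff `v` has `(d+1)/2`
components equal to `1` and `(d−1)/2` components equal to `−1`; (b) if `d` is even,
`∑ |v j| ≤ √(d² − 1)`, with equality iff `v` has `d/2` components equal to `(1 + √(d²−1))/d`
and `d/2` components equal to `(1 − √(d²−1))/d`. -/
theorem stmt_13 (d : ℕ) (hd : 1 ≤ d) (v : Fin d → ℝ)
    (hsum : ∑ j, v j = 1) (hsq : ∑ j, v j ^ 2 = d) :
    (Odd d →
      (∑ j, |v j| ≤ d ∧
        ((∑ j, |v j|) = d ↔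
          ∃ S : Finset (Fin d), S.card = (d + 1) / 2 ∧
            (∀ j ∈ S, v j = 1) ∧ ∀ j ∉ S, v j = -1))) ∧
    (Even d →
      (∑ j, |v j| ≤ Real.sqrt ((d : ℝ) ^ 2 - 1) ∧
        ((∑ j, |v j|) = Real.sqrt ((d : ℝ) ^ 2 - 1) ↔
          ∃ S : Finset (Fin d), S.card = d / 2 ∧
            (∀ j ∈ S, v j = (1 + Real.sqrt ((d : ℝ) ^ 2 - 1)) / d) ∧
            ∀ j ∉ S, v j = (1 - Real.sqrt ((d : ℝ) ^ 2 - 1)) / d))) := by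
  constructor
  · intro hodd
    have hb : ∀ j : Fin d, |v j| ≤ ((v j) ^ 2 + 1) / 2 := fun j => by
      nlinarith [sq_abs (v j), sq_nonneg (|v j| - 1), abs_nonneg (v j)]
    have hsum2 : ∑ j, ((v j) ^ 2 + 1) / 2 = (d : ℝ) := by
      rw [← Finset.sum_div, Finset.sum_add_distrib, hsq, Finset.sum_const,
        Finset.card_univ, Fintype.card_fin, nsmul_eq_mul]
      ring
    have hbound : ∑ j, |v j| ≤ d := by
      calc ∑ j, |v j| ≤ ∑ j, ((v j) ^ 2 + 1) / 2 :=
            Finset.sum_le_sum fun j _ => hb j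
        _ = d := hsum2
    refine ⟨hbound, ?_, ?_⟩
    · intro heq
      have hz : ∑ j, (((v j) ^ 2 + 1) / 2 - |v j|) = 0 := by
        rw [Finset.sum_sub_distrib, hsum2, heq]; ring
      have hall : ∀ j : Fin d, |v j| = 1 := by
        intro j
        have h0 := (Finset.sum_eq_zero_iff_of_nonneg
          (fun i _ => sub_nonneg.2 (hb i))).1 hz j (Finset.mem_univ j)
        nlinarith [sq_abs (v j)]
      refine ⟨Finset.univ.filter (fun j => v j = 1), ?_, ?_, ?_⟩
      · -- card
        have hcS : ∀ j ∈ Finset.univ.filter (fun j => v j = 1), v j = (1:ℝ) :=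
          fun j hj => (Finset.mem_filter.1 hj).2
        have hcN : ∀ j ∈ (Finset.univ.filter (fun j => v j = 1))ᶜ, v j = (-1:ℝ) := by
          intro j hj
          have hj' : ¬ v j = 1 := by
            simpa using (Finset.mem_compl.1 hj)
          rcases abs_eq (zero_le_one (α := ℝ)) |>.1 (hall j) with h | h
          · exact absurd h hj'
          · exact h
        set S := Finset.univ.filter (fun j => v j = 1) with hSdef
        have h1 : ∑ j ∈ S, v j = S.card := by
          rw [Finset.sum_congr rfl hcS, Finset.sum_const, nsmul_eq_mul, mul_one]
        have h2 : ∑ j ∈ Sᶜ, v j = -(Sᶜ.card : ℝ) := by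
          rw [Finset.sum_congr rfl hcN, Finset.sum_const, nsmul_eq_mul]
          ring
        have hcc : S.card + Sᶜ.card = d := by
          rw [Finset.card_add_card_compl, Fintype.card_fin]
        have hre : (S.card : ℝ) - (Sᶜ.card : ℝ) = 1 := by
          have := Finset.sum_add_sum_compl S v
          rw [h1, h2, hsum] at this
          linarith
        have : (S.card : ℤ) - (Sᶜ.card : ℤ) = 1 := by exact_mod_cast hre
        omega
      · exact fun j hj => (Finset.mem_filter.1 hj).2
      · intro j hj
        have hj' : ¬ v j = 1 := fun h => hj (Finset.mem_filter.2 ⟨Finset.mem_univ j, h⟩)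
        rcases abs_eq (zero_le_one (α := ℝ)) |>.1 (hall j) with h | h
        · exact absurd h hj'
        · exact h
    · rintro ⟨S, hc, h1, h2⟩
      have hcc : S.card + Sᶜ.card = d := by
        rw [Finset.card_add_card_compl, Fintype.card_fin]
      rw [← Finset.sum_add_sum_compl S (fun j => |v j|)]
      have e1 : ∑ j ∈ S, |v j| = (S.card : ℝ) := by
        rw [Finset.sum_congr rfl (fun j hj => by rw [h1 j hj]; norm_num :
          ∀ j ∈ S, |v j| = (1:ℝ)), Finset.sum_const, nsmul_eq_mul, mul_one]
      have e2 : ∑ j ∈ Sᶜ, |v j| = (Sᶜ.card : ℝ) := by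
        rw [Finset.sum_congr rfl (fun j hj => by
          rw [h2 j (Finset.mem_compl.1 hj)]; norm_num :
          ∀ j ∈ Sᶜ, |v j| = (1:ℝ)), Finset.sum_const, nsmul_eq_mul, mul_one]
      rw [e1, e2]
      exact_mod_cast congrArg (Nat.cast : ℕ → ℝ) hcc
  · intro heven
    obtain ⟨e, he⟩ := heven
    have he1 : 1 ≤ e := by omega
    have hd2 : 2 ≤ d := by omega
    have hdR : (2 : ℝ) ≤ (d : ℝ) := by exact_mod_cast hd2
    have hdpos : (0 : ℝ) < d := by linarith
    set s : ℝ := Real.sqrt ((d : ℝ) ^ 2 - 1) with hsdef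
    have hs_nonneg : 0 ≤ s := Real.sqrt_nonneg _
    have hs_sq : s ^ 2 = (d : ℝ) ^ 2 - 1 := Real.sq_sqrt (by nlinarith)
    have hs1 : 1 < s := by nlinarith
    have hsd : s < d := by nlinarith
    have hde : (d : ℝ) = 2 * e := by
      rw [he]; push_cast; ring
    set P : Finset (Fin d) := Finset.univ.filter (fun j => 0 ≤ v j) with hPdef
    have hPmem : ∀ j, j ∈ P ↔ 0 ≤ v j := fun j => by simp [hPdef]
    have hNmem : ∀ j, j ∈ Pᶜ ↔ v j < 0 := fun j => by simp [hPdef]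
    set A : ℝ := ∑ j ∈ P, v j with hAdef
    set B : ℝ := ∑ j ∈ Pᶜ, v j with hBdef
    set SP : ℝ := ∑ j ∈ P, (v j) ^ 2 with hSPdef
    set SN : ℝ := ∑ j ∈ Pᶜ, (v j) ^ 2 with hSNdef
    set t : ℝ := ∑ j, |v j| with htdef
    have hAB : A + B = 1 := by rw [hAdef, hBdef, Finset.sum_add_sum_compl, hsum]
    have hS : SP + SN = d := by rw [hSPdef, hSNdef, Finset.sum_add_sum_compl, hsq]
    have habs : t = A - B := by
      rw [htdef, ← Finset.sum_add_sum_compl P (fun j => |v j|)]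
      have e1 : ∑ j ∈ P, |v j| = A :=
        Finset.sum_congr rfl fun j hj => abs_of_nonneg ((hPmem j).1 hj)
      have e2 : ∑ j ∈ Pᶜ, |v j| = -B := by
        rw [hBdef, ← Finset.sum_neg_distrib]
        exact Finset.sum_congr rfl fun j hj => abs_of_neg ((hNmem j).1 hj)
      rw [e1, e2]; ring
    have ht0 : 0 ≤ t := Finset.sum_nonneg fun j _ => abs_nonneg _
    have hcc : P.card + Pᶜ.card = d := by
      rw [Finset.card_add_card_compl, Fintype.card_fin]
    have hppos : 1 ≤ P.card := by
      by_contra h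
      have hP0 : P = ∅ := Finset.card_eq_zero.1 (by omega)
      have hlt : ∑ j, v j < ∑ _j : Fin d, (0:ℝ) := by
        apply Finset.sum_lt_sum_of_nonempty
        · exact Finset.univ_nonempty_iff.2 ⟨⟨0, by omega⟩⟩
        · intro i _
          by_contra h'
          have : i ∈ P := (hPmem i).2 (by linarith [not_lt.1 h'])
          simp [hP0] at this
      rw [hsum] at hlt
      simp at hlt
      linarith
    have hpn : (P.card : ℝ) + (Pᶜ.card : ℝ) = d := by exact_mod_cast hcc
    set pR : ℝ := (P.card : ℝ) with hpRdef
    set nR : ℝ := (Pᶜ.card : ℝ) with hnRdef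
    have hp1R : 1 ≤ pR := by rw [hpRdef]; exact_mod_cast hppos
    have hA : A = (t + 1) / 2 := by linarith
    have hB : B = (1 - t) / 2 := by linarith
    have CS1 : A ^ 2 ≤ pR * SP := by
      rw [hAdef, hSPdef, hpRdef]; exact sq_sum_le_card_mul_sum_sq
    have CS2 : B ^ 2 ≤ nR * SN := by
      rw [hBdef, hSNdef, hnRdef]; exact sq_sum_le_card_mul_sum_sq
    have hcase : pR ≤ (e : ℝ) ∨ (e : ℝ) + 1 ≤ pR := by
      rcases le_or_gt P.card e with h | h
      · left; rw [hpRdef]; exact_mod_cast h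
      · right; rw [hpRdef]; exact_mod_cast h
    clear_value s t P A B SP SN pR nR
    have main : t ≤ s ∧ (t = s → ∃ S : Finset (Fin d), S.card = d / 2 ∧
        (∀ j ∈ S, v j = (1 + s) / d) ∧ ∀ j ∉ S, v j = (1 - s) / d) := by
      rcases Nat.eq_zero_or_pos (Pᶜ.card) with hn0 | hn1
      · have hN0 : Pᶜ = ∅ := Finset.card_eq_zero.1 hn0
        have hB0 : B = 0 := by rw [hBdef, hN0]; simp
        have ht1 : t = 1 := by linarith
        constructor
        · linarith
        · intro hts; exact absurd (hts ▸ ht1).symm (by linarith)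
      · have hn1R : 1 ≤ nR := by rw [hnRdef]; exact_mod_cast hn1
        have hu0 : 0 ≤ pR * SP - A ^ 2 := by linarith
        have hw0 : 0 ≤ nR * SN - B ^ 2 := by linarith
        have hF : 0 ≤ 4 * pR * nR * (d : ℝ) - (nR * (t + 1) ^ 2 + pR * (t - 1) ^ 2) := by
          have h1 : nR * A ^ 2 ≤ nR * (pR * SP) :=
            mul_le_mul_of_nonneg_left CS1 (by linarith)
          have h2 : pR * B ^ 2 ≤ pR * (nR * SN) :=
            mul_le_mul_of_nonneg_left CS2 (by linarith)
          have h3 : pR * nR * (SP + SN) = pR * nR * (d : ℝ) := by rw [hS]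
          have e1 : (t + 1) ^ 2 = 4 * A ^ 2 := by rw [hA]; ring
          have e2 : (t - 1) ^ 2 = 4 * B ^ 2 := by rw [hB]; ring
          rw [e1, e2]
          linarith only [h1, h2, h3]
        have htsq : t ^ 2 ≤ (d : ℝ) ^ 2 - 1 :=
          even_core (d : ℝ) (e : ℝ) pR nR t hde hdR hp1R (by linarith) hpn ht0 hcase hF
        constructor
        · calc t = Real.sqrt (t ^ 2) := (Real.sqrt_sq ht0).symm
            _ ≤ s := by rw [hsdef]; exact Real.sqrt_le_sqrt htsq
        · intro hts
          have ht1' : 1 < t := by rw [hts]; exact hs1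
          have htd' : t < (d : ℝ) := by rw [hts]; exact hsd
          have ht2 : t ^ 2 = (d : ℝ) ^ 2 - 1 := by rw [hts]; exact hs_sq
          obtain ⟨hpReq, hF0⟩ :=
            even_core_eq (d : ℝ) (e : ℝ) pR nR t hde hdR hp1R (by linarith) hpn
              ht1' htd' ht2 hcase hF
          have hpcard : P.card = e := by
            have := hpRdef ▸ hpReq
            exact_mod_cast this
          have hncard : Pᶜ.card = e := by omega
          have hnReq : nR = (e : ℝ) := by rw [hnRdef, hncard]
          have hUW : nR * (pR * SP - A ^ 2) + pR * (nR * SN - B ^ 2) = 0 := by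
            linear_combination hF0 / 4 + pR * nR * hS + (-(nR) * (A + (t + 1) / 2)) * hA
              + (-(pR) * (B + (1 - t) / 2)) * hB
          obtain ⟨hu, hw⟩ := slack_zero pR nR _ _ hp1R hn1R hu0 hw0 hUW
          have heR : (0:ℝ) < (e : ℝ) := by exact_mod_cast he1
          have hvP : ∀ j ∈ P, v j = (1 + s) / d := by
            apply eq_const_of_sq_sum_eq P v ((1 + s) / d)
            · show (P.card : ℝ) * ((1 + s) / d) = ∑ i ∈ P, v i
              rw [← hpRdef, hpReq, hde, ← hAdef, hA, hts]
              field_simp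
              ring
            · show (∑ i ∈ P, v i) ^ 2 = (P.card : ℝ) * ∑ i ∈ P, v i ^ 2
              rw [← hpRdef, ← hAdef, ← hSPdef]
              linarith [hu]
          have hvN : ∀ j ∈ Pᶜ, v j = (1 - s) / d := by
            apply eq_const_of_sq_sum_eq Pᶜ v ((1 - s) / d)
            · show (Pᶜ.card : ℝ) * ((1 - s) / d) = ∑ i ∈ Pᶜ, v i
              rw [← hnRdef, hnReq, hde, ← hBdef, hB, hts]
              field_simp
            · show (∑ i ∈ Pᶜ, v i) ^ 2 = (Pᶜ.card : ℝ) * ∑ i ∈ Pᶜ, v i ^ 2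
              rw [← hnRdef, ← hBdef, ← hSNdef]
              linarith [hw]
          exact ⟨P, by omega, hvP, fun j hj => hvN j (Finset.mem_compl.2 hj)⟩
    refine ⟨main.1, main.2, ?_⟩
    rintro ⟨S, hc, h1, h2⟩
    have hcS : Sᶜ.card = e := by
      have : S.card + Sᶜ.card = d := by
        rw [Finset.card_add_card_compl, Fintype.card_fin]
      omega
    have hcS2 : S.card = e := by omega
    have hx1 : |(1 + s) / (d : ℝ)| = (1 + s) / d := abs_of_nonneg (by positivity)
    have hx2 : |(1 - s) / (d : ℝ)| = (s - 1) / d := by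
      rw [abs_of_neg (by apply div_neg_of_neg_of_pos <;> nlinarith)]
      ring
    have hsplit : ∑ j : Fin d, |v j| = ∑ j ∈ S, |v j| + ∑ j ∈ Sᶜ, |v j| :=
      (Finset.sum_add_sum_compl S (fun j => |v j|)).symm
    have e1 : ∑ j ∈ S, |v j| = (e : ℝ) * ((1 + s) / d) := by
      rw [Finset.sum_congr rfl (fun j hj => by rw [h1 j hj, hx1] :
        ∀ j ∈ S, |v j| = (1 + s) / (d : ℝ)), Finset.sum_const, nsmul_eq_mul, hcS2]
    have e2 : ∑ j ∈ Sᶜ, |v j| = (e : ℝ) * ((s - 1) / d) := by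
      rw [Finset.sum_congr rfl (fun j hj => by
        rw [h2 j (Finset.mem_compl.1 hj), hx2] :
        ∀ j ∈ Sᶜ, |v j| = (s - 1) / (d : ℝ)), Finset.sum_const, nsmul_eq_mul, hcS]
    rw [htdef, hsplit, e1, e2, hde]
    have heRne : ((e : ℝ)) ≠ 0 := Nat.cast_ne_zero.2 (by omega)
    field_simp
    ring
end

section
/- Let d ≥ 2 and let v : Fin d → ℝ satisfy ∑_j v_j = 1 and ∑_j v_j² = d. Writing v_max = max_j v_j and v_min = min_j v_j, one has ((d−1)·v_max − (d+1)·v_min)/2 ≤ ((d−1)/(√2·d))·√((d+1)(d² + d + 2)) − 1/d, and equality holds if and only if, setting s = √((d+1)/(2(d²+d+2))), the vector v takes the value 1/d + ((d²−d+2)/d)·s at exactly one coordinate, the value 1/d − ((d²+d−2)/d)·s at exactly one coordinate, and the value 1/d + (2/d)·s at the remaining d−2 coordinates. -/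
/-!
Fix indices `i ≠ k`. The objective `F v = ((d - 1) v i - (d + 1) v k) / 2` is linear in `v`, and
the vector `w = (1 + 2s)/d + s (d - 1) eᵢ - s (d + 1) eₖ` lies on the sphere `∑ v = 1, ∑ v² = d`
precisely for `s = √((d + 1) / (2 (d² + d + 2)))`. For `v` on the same sphere, `w - v` is
orthogonal to the constants and `‖v‖ = ‖w‖`, so `‖v - w‖² = 2 ⟪w - v, w⟫ = 4 s (F w - F v)`:
hence `F v ≤ F w`, with equality iff `v = w`. Taking `i`, `k` to be an argmax and an argmin of `v`
(distinct, as no constant vector lies on the sphere when `d ≥ 2`) gives the bound; conversely `w`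
attains its maximum at `i` and its minimum at `k`.
-/

open Finset

theorem sum_sq_sub_eq_of_sum_sq_eq {ι : Type*} [Fintype ι] {v w : ι → ℝ}
    (h : ∑ j, v j ^ 2 = ∑ j, w j ^ 2) :
    ∑ j, (v j - w j) ^ 2 = 2 * ∑ j, (w j - v j) * w j := by
  have hexp : ∀ j, (v j - w j) ^ 2 = v j ^ 2 - w j ^ 2 + 2 * ((w j - v j) * w j) :=
    fun j => by ring
  simp only [hexp, sum_add_distrib, sum_sub_distrib, ← mul_sum, h, sub_self, zero_add]

section ConstAddSingle

variable {ι : Type*} [DecidableEq ι]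

def constAddSingleAddSingle (c : ℝ) (i : ι) (a : ℝ) (k : ι) (b : ℝ) : ι → ℝ :=
  Function.const ι c + Pi.single i a + Pi.single k b

variable {c a b : ℝ} {i k : ι}

theorem constAddSingleAddSingle_apply_left (hik : i ≠ k) :
    constAddSingleAddSingle c i a k b i = c + a := by
  simp [constAddSingleAddSingle, hik]

theorem constAddSingleAddSingle_apply_right (hik : i ≠ k) :
    constAddSingleAddSingle c i a k b k = c + b := by
  simp [constAddSingleAddSingle, hik.symm]

theorem constAddSingleAddSingle_apply_of_ne {j : ι} (hi : j ≠ i) (hk : j ≠ k) :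
    constAddSingleAddSingle c i a k b j = c := by
  simp [constAddSingleAddSingle, hi, hk]

theorem constAddSingleAddSingle_le_apply_left (hik : i ≠ k) (ha : 0 ≤ a) (hb : b ≤ 0) (j : ι) :
    constAddSingleAddSingle c i a k b j ≤ constAddSingleAddSingle c i a k b i := by
  by_cases hji : j = i
  · rw [hji]
  by_cases hjk : j = k
  · rw [hjk, constAddSingleAddSingle_apply_left hik, constAddSingleAddSingle_apply_right hik]
    linarith
  · rw [constAddSingleAddSingle_apply_of_ne hji hjk, constAddSingleAddSingle_apply_left hik]
    linarith

theorem constAddSingleAddSingle_apply_right_le (hik : i ≠ k) (ha : 0 ≤ a) (hb : b ≤ 0) (j : ι) :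
    constAddSingleAddSingle c i a k b k ≤ constAddSingleAddSingle c i a k b j := by
  by_cases hjk : j = k
  · rw [hjk]
  by_cases hji : j = i
  · rw [hji, constAddSingleAddSingle_apply_left hik, constAddSingleAddSingle_apply_right hik]
    linarith
  · rw [constAddSingleAddSingle_apply_of_ne hji hjk, constAddSingleAddSingle_apply_right hik]
    linarith

variable [Fintype ι]

theorem sum_mul_constAddSingleAddSingle (u : ι → ℝ) :
    ∑ j, u j * constAddSingleAddSingle c i a k b j = c * ∑ j, u j + a * u i + b * u k := by
  simp [constAddSingleAddSingle, mul_add, sum_add_distrib, mul_sum, Pi.single_apply, mul_comm]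

theorem sum_constAddSingleAddSingle :
    ∑ j, constAddSingleAddSingle c i a k b j = Fintype.card ι * c + a + b := by
  simp [constAddSingleAddSingle, sum_add_distrib]

theorem sum_sq_constAddSingleAddSingle (hik : i ≠ k) :
    ∑ j, constAddSingleAddSingle c i a k b j ^ 2
      = Fintype.card ι * c ^ 2 + 2 * c * (a + b) + a ^ 2 + b ^ 2 := by
  simp only [sq, sum_mul_constAddSingleAddSingle, constAddSingleAddSingle_apply_left hik,
    constAddSingleAddSingle_apply_right hik, sum_constAddSingleAddSingle]
  ring

theorem sum_sq_sub_constAddSingleAddSingle {v : ι → ℝ}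
    (hsum : ∑ j, v j = ∑ j, constAddSingleAddSingle c i a k b j)
    (hsq : ∑ j, v j ^ 2 = ∑ j, constAddSingleAddSingle c i a k b j ^ 2) :
    ∑ j, (v j - constAddSingleAddSingle c i a k b j) ^ 2
      = 2 * (a * (constAddSingleAddSingle c i a k b i - v i)
          + b * (constAddSingleAddSingle c i a k b k - v k)) := by
  rw [sum_sq_sub_eq_of_sum_sq_eq hsq, sum_mul_constAddSingleAddSingle, sum_sub_distrib, ← hsum,
    sub_self, mul_zero, zero_add]

end ConstAddSingle

noncomputable def extremalScale (d : ℕ) : ℝ := √((d + 1) / (2 * (d ^ 2 + d + 2)))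

noncomputable def extremalVector (d : ℕ) (i k : Fin d) : Fin d → ℝ :=
  constAddSingleAddSingle ((1 + 2 * extremalScale d) / d) i (extremalScale d * (d - 1))
    k (-(extremalScale d * (d + 1)))

section Extremal

theorem extremalScale_pos (d : ℕ) : 0 < extremalScale d :=
  Real.sqrt_pos.2 (by positivity)

theorem two_mul_mul_extremalScale_sq (d : ℕ) :
    2 * ((d : ℝ) ^ 2 + d + 2) * extremalScale d ^ 2 = d + 1 := by
  rw [extremalScale, Real.sq_sqrt (by positivity)]
  field_simp

theorem sqrt_mul_eq_sqrt_two_mul_extremalScale (d : ℕ) :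
    √(((d : ℝ) + 1) * ((d : ℝ) ^ 2 + d + 2)) = √2 * extremalScale d * ((d : ℝ) ^ 2 + d + 2) := by
  have hnonneg : 0 ≤ √2 * extremalScale d * ((d : ℝ) ^ 2 + d + 2) :=
    mul_nonneg (mul_nonneg (Real.sqrt_nonneg 2) (extremalScale_pos d).le) (by positivity)
  rw [← Real.sqrt_sq hnonneg]
  congr 1
  rw [mul_pow, mul_pow, Real.sq_sqrt zero_le_two, ← two_mul_mul_extremalScale_sq d]
  ring

variable {d : ℕ} {i k : Fin d}

theorem extremalVector_apply_left (hik : i ≠ k) :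
    extremalVector d i k i = 1 / d + (((d : ℝ) ^ 2 - d + 2) / d) * extremalScale d := by
  have : (d : ℝ) ≠ 0 := by exact_mod_cast i.pos.ne'
  rw [extremalVector, constAddSingleAddSingle_apply_left hik]
  field_simp
  ring

theorem extremalVector_apply_right (hik : i ≠ k) :
    extremalVector d i k k = 1 / d - (((d : ℝ) ^ 2 + d - 2) / d) * extremalScale d := by
  have : (d : ℝ) ≠ 0 := by exact_mod_cast i.pos.ne'
  rw [extremalVector, constAddSingleAddSingle_apply_right hik]
  field_simp
  ring

theorem extremalVector_apply_of_ne {j : Fin d} (hi : j ≠ i) (hk : j ≠ k) :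
    extremalVector d i k j = 1 / d + (2 / d) * extremalScale d := by
  rw [extremalVector, constAddSingleAddSingle_apply_of_ne hi hk]
  ring

theorem iSup_extremalVector (hik : i ≠ k) :
    ⨆ j, extremalVector d i k j = extremalVector d i k i := by
  have : Nonempty (Fin d) := ⟨i⟩
  have hd : (1 : ℝ) ≤ d := by exact_mod_cast i.pos
  refine le_antisymm (ciSup_le fun j => constAddSingleAddSingle_le_apply_left hik ?_ ?_ j)
    (le_ciSup (Finite.bddAbove_range _) i)
  · exact mul_nonneg (extremalScale_pos d).le (by linarith)
  · exact neg_nonpos.2 (mul_nonneg (extremalScale_pos d).le (by linarith))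

theorem iInf_extremalVector (hik : i ≠ k) :
    ⨅ j, extremalVector d i k j = extremalVector d i k k := by
  have : Nonempty (Fin d) := ⟨i⟩
  have hd : (1 : ℝ) ≤ d := by exact_mod_cast i.pos
  refine le_antisymm (ciInf_le (Finite.bddBelow_range _) k)
    (le_ciInf fun j => constAddSingleAddSingle_apply_right_le hik ?_ ?_ j)
  · exact mul_nonneg (extremalScale_pos d).le (by linarith)
  · exact neg_nonpos.2 (mul_nonneg (extremalScale_pos d).le (by linarith))

theorem sum_extremalVector (i k : Fin d) : ∑ j, extremalVector d i k j = 1 := by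
  have : (d : ℝ) ≠ 0 := by exact_mod_cast i.pos.ne'
  rw [extremalVector, sum_constAddSingleAddSingle, Fintype.card_fin]
  field_simp
  ring

theorem sum_sq_extremalVector (hik : i ≠ k) : ∑ j, extremalVector d i k j ^ 2 = d := by
  have : (d : ℝ) ≠ 0 := by exact_mod_cast i.pos.ne'
  rw [extremalVector, sum_sq_constAddSingleAddSingle hik, Fintype.card_fin]
  field_simp
  linear_combination ((d : ℝ) - 1) * two_mul_mul_extremalScale_sq d

theorem extremalVector_objective (hik : i ≠ k) :
    (((d : ℝ) - 1) * extremalVector d i k i - ((d : ℝ) + 1) * extremalVector d i k k) / 2 =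
      ((d : ℝ) - 1) / (√2 * d) * √(((d : ℝ) + 1) * ((d : ℝ) ^ 2 + d + 2)) - 1 / d := by
  have : (d : ℝ) ≠ 0 := by exact_mod_cast i.pos.ne'
  rw [extremalVector_apply_left hik, extremalVector_apply_right hik,
    sqrt_mul_eq_sqrt_two_mul_extremalScale]
  field_simp
  ring

theorem eq_extremalVector_iff {v : Fin d → ℝ} (hik : i ≠ k) :
    v = extremalVector d i k ↔
      v i = 1 / d + (((d : ℝ) ^ 2 - d + 2) / d) * extremalScale d ∧
      v k = 1 / d - (((d : ℝ) ^ 2 + d - 2) / d) * extremalScale d ∧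
      ∀ j, j ≠ i → j ≠ k → v j = 1 / d + (2 / d) * extremalScale d := by
  constructor
  · rintro rfl
    exact ⟨extremalVector_apply_left hik, extremalVector_apply_right hik,
      fun j => extremalVector_apply_of_ne⟩
  · rintro ⟨hi, hk, hrest⟩
    funext j
    by_cases hji : j = i
    · rw [hji, hi, extremalVector_apply_left hik]
    by_cases hjk : j = k
    · rw [hjk, hk, extremalVector_apply_right hik]
    · rw [hrest j hji hjk, extremalVector_apply_of_ne hji hjk]

end Extremal

section Objective

variable {d : ℕ} {v : Fin d → ℝ} {i k : Fin d}

theorem sum_sq_sub_extremalVector (hsum : ∑ j, v j = 1) (hsq : ∑ j, v j ^ 2 = d)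
    (hik : i ≠ k) :
    ∑ j, (v j - extremalVector d i k j) ^ 2 =
      4 * extremalScale d *
        ((((d : ℝ) - 1) * extremalVector d i k i - ((d : ℝ) + 1) * extremalVector d i k k) / 2 -
          (((d : ℝ) - 1) * v i - ((d : ℝ) + 1) * v k) / 2) := by
  have hsum' := hsum.trans (sum_extremalVector i k).symm
  have hsq' := hsq.trans (sum_sq_extremalVector hik).symm
  rw [extremalVector] at hsum' hsq' ⊢
  rw [sum_sq_sub_constAddSingleAddSingle hsum' hsq']
  ring

theorem objective_le_extremalVector (hsum : ∑ j, v j = 1) (hsq : ∑ j, v j ^ 2 = d)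
    (hik : i ≠ k) :
    (((d : ℝ) - 1) * v i - ((d : ℝ) + 1) * v k) / 2 ≤
      (((d : ℝ) - 1) * extremalVector d i k i - ((d : ℝ) + 1) * extremalVector d i k k) / 2 := by
  have hnonneg : 0 ≤ ∑ j, (v j - extremalVector d i k j) ^ 2 :=
    sum_nonneg fun j _ => sq_nonneg _
  rw [sum_sq_sub_extremalVector hsum hsq hik,
    mul_nonneg_iff_of_pos_left (by linarith [extremalScale_pos d]), sub_nonneg] at hnonneg
  exact hnonneg

theorem objective_eq_extremalVector_iff (hsum : ∑ j, v j = 1) (hsq : ∑ j, v j ^ 2 = d)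
    (hik : i ≠ k) :
    (((d : ℝ) - 1) * v i - ((d : ℝ) + 1) * v k) / 2 =
      (((d : ℝ) - 1) * extremalVector d i k i - ((d : ℝ) + 1) * extremalVector d i k k) / 2 ↔
      v = extremalVector d i k := by
  refine ⟨fun h => ?_, fun h => h ▸ rfl⟩
  have hzero : ∑ j, (v j - extremalVector d i k j) ^ 2 = 0 := by
    rw [sum_sq_sub_extremalVector hsum hsq hik, h, sub_self, mul_zero]
  funext j
  have hj := congrFun ((Fintype.sum_eq_zero_iff_of_nonneg fun j => sq_nonneg _).1 hzero) j
  exact sub_eq_zero.1 (pow_eq_zero_iff two_ne_zero |>.1 hj)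

theorem not_forall_eq_of_sum_eq_one_of_sum_sq_eq (hd : 2 ≤ d) (hsum : ∑ j, v j = 1)
    (hsq : ∑ j, v j ^ 2 = d) (c : ℝ) : ¬ ∀ j, v j = c := by
  intro h
  simp only [h, sum_const, card_univ, Fintype.card_fin, nsmul_eq_mul] at hsum hsq
  have hdR : (2 : ℝ) ≤ d := by exact_mod_cast hd
  nlinarith

end Objective

/-- Lemma S3: If `d ≥ 2` and `v : Fin d → ℝ` satisfies `∑ v j = 1` and
`∑ (v j)² = d`, then with `v_max = max_j v j` and `v_min = min_j v j`,
`((d−1)v_max − (d+1)v_min)/2 ≤ ((d−1)/(√2·d))·√((d+1)(d²+d+2)) − 1/d`, with equality iff,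
setting `s = √((d+1)/(2(d²+d+2)))`, `v` takes the value `1/d + ((d²−d+2)/d)s` at exactly one
coordinate, `1/d − ((d²+d−2)/d)s` at exactly one coordinate, and `1/d + (2/d)s` at the
remaining `d−2` coordinates. -/
theorem stmt_14 (d : ℕ) (hd : 2 ≤ d) (v : Fin d → ℝ)
    (hsum : ∑ j, v j = 1) (hsq : ∑ j, v j ^ 2 = d) :
    ((((d : ℝ) - 1) * (⨆ j, v j) - ((d : ℝ) + 1) * (⨅ j, v j)) / 2 ≤
      (((d : ℝ) - 1) / (Real.sqrt 2 * d)) *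
        Real.sqrt (((d : ℝ) + 1) * ((d : ℝ) ^ 2 + d + 2)) - 1 / d) ∧
    ((((d : ℝ) - 1) * (⨆ j, v j) - ((d : ℝ) + 1) * (⨅ j, v j)) / 2 =
        (((d : ℝ) - 1) / (Real.sqrt 2 * d)) *
          Real.sqrt (((d : ℝ) + 1) * ((d : ℝ) ^ 2 + d + 2)) - 1 / d ↔
      ∃ j₀ j₁ : Fin d, j₀ ≠ j₁ ∧
        v j₀ = 1 / d + (((d : ℝ) ^ 2 - d + 2) / d) *
          Real.sqrt (((d : ℝ) + 1) / (2 * ((d : ℝ) ^ 2 + d + 2))) ∧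
        v j₁ = 1 / d - (((d : ℝ) ^ 2 + d - 2) / d) *
          Real.sqrt (((d : ℝ) + 1) / (2 * ((d : ℝ) ^ 2 + d + 2))) ∧
        ∀ j, j ≠ j₀ → j ≠ j₁ →
          v j = 1 / d + (2 / d) *
            Real.sqrt (((d : ℝ) + 1) / (2 * ((d : ℝ) ^ 2 + d + 2)))) := by
  have : Nonempty (Fin d) := ⟨⟨0, by omega⟩⟩
  obtain ⟨i, hi⟩ := exists_eq_ciSup_of_finite (f := v)
  obtain ⟨k, hk⟩ := exists_eq_ciInf_of_finite (f := v)
  have hik : i ≠ k := by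
    rintro rfl
    refine not_forall_eq_of_sum_eq_one_of_sum_sq_eq hd hsum hsq (v i) fun j => le_antisymm ?_ ?_
    · exact hi ▸ le_ciSup (Finite.bddAbove_range v) j
    · exact hk ▸ ciInf_le (Finite.bddBelow_range v) j
  rw [← hi, ← hk, ← extremalVector_objective hik]
  refine ⟨objective_le_extremalVector hsum hsq hik, fun h => ?_, ?_⟩
  · exact ⟨i, k, hik, (eq_extremalVector_iff hik).1
      ((objective_eq_extremalVector_iff hsum hsq hik).1 h)⟩
  · rintro ⟨i₀, i₁, hne, hv⟩
    obtain rfl := (eq_extremalVector_iff hne).2 hv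
    rw [hi, hk, iSup_extremalVector hne, iInf_extremalVector hne, extremalVector_objective hne,
      extremalVector_objective hik]
end

section
/- Let Q be an NQPR in dimension d ≥ 2 and let U be a d×d unitary matrix. Then Re tr(Q_j · U · Q_k · U†) ≥ 0 for all indices j, k if and only if U belongs to the symmetry group of Q, i.e., there exists a permutation σ of the index set {1, …, d²} such that U Q_j U† = Q_{σ(j)} for all j. -/
/-!
Fix `k`, put `R = U Q_k U†` and `v_j = tr(Q_j R) / d`; these are real because `Q_j` and `R` are
Hermitian. The `d²` matrices `Q_j` are trace-orthogonal, hence a basis of all `d × d` matrices,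
so `R = ∑ v_j Q_j` and Parseval gives `∑ v_j² = tr(R²) / d = tr(Q_k²) / d = 1`, while
`∑_j Q_j = d I` gives `∑ v_j = tr R = 1`. A nonnegative vector with both sums equal to `1` is a
standard basis vector, so `R = Q_σ(k)`; and `σ` is injective since `tr(R_k R_k') = tr(Q_k Q_k')`.
Conversely, if `U` permutes the `Q_j` then every entry is `tr(Q_j Q_σ(k)) ∈ {0, d}`.
-/

open Matrix

namespace Matrix

theorem trace_conj_mul_conj {n R : Type*} [Fintype n] [DecidableEq n] [CommRing R]
    [StarRing R] {U : Matrix n n R} (hU : Uᴴ * U = 1) (A B : Matrix n n R) :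
    (U * A * Uᴴ * (U * B * Uᴴ)).trace = (A * B).trace := by
  have : U * A * Uᴴ * (U * B * Uᴴ) = U * (A * B) * Uᴴ := by
    simp only [Matrix.mul_assoc, ← Matrix.mul_assoc Uᴴ U, hU, Matrix.one_mul]
  rw [this, trace_mul_cycle, hU, Matrix.one_mul]

theorem IsHermitian.ofReal_re_trace_mul {n : Type*} [Fintype n]
    {A B : Matrix n n ℂ} (hA : A.IsHermitian) (hB : B.IsHermitian) :
    (((A * B).trace.re : ℝ) : ℂ) = (A * B).trace := by
  rw [← Complex.conj_eq_iff_re, ← Complex.star_def, ← trace_conjTranspose, conjTranspose_mul,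
    hA.eq, hB.eq, trace_mul_comm]

section TraceOrthogonal

variable {K n ι : Type*} [Field K] [Fintype n] [Fintype ι] [DecidableEq ι]
  {Q : ι → Matrix n n K} {c : K}

theorem linearIndependent_of_trace_mul_eq_ite
    (hQ : ∀ j k, (Q j * Q k).trace = if j = k then c else 0) (hc : c ≠ 0) :
    LinearIndependent K Q := by
  rw [Fintype.linearIndependent_iff]
  intro a ha k
  have htrace : ∑ j, a j * (Q j * Q k).trace = 0 := by
    simpa [Finset.sum_mul, trace_sum, trace_smul] using congrArg (fun X => (X * Q k).trace) ha
  simpa [hQ, hc] using htrace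

theorem eq_sum_trace_mul_smul_of_trace_mul_eq_ite
    (hQ : ∀ j k, (Q j * Q k).trace = if j = k then c else 0) (hc : c ≠ 0)
    (hcard : Fintype.card ι = Fintype.card n ^ 2) (X : Matrix n n K) :
    X = ∑ j, ((Q j * X).trace / c) • Q j := by
  let b := basisOfLinearIndependentOfCardEqFinrank' Q
    (linearIndependent_of_trace_mul_eq_ite hQ hc) (by simp [Module.finrank_matrix, hcard, sq])
  have hX : X = ∑ j, b.repr X j • Q j := by
    simpa [b] using (b.sum_repr X).symm
  have hcoeff : ∀ j, (Q j * X).trace = b.repr X j * c := fun j => by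
    conv_lhs => rw [hX]
    simp [Finset.mul_sum, trace_sum, trace_smul, hQ]
  conv_lhs => rw [hX]
  simp [hcoeff, hc]

theorem trace_mul_self_eq_sum_sq_of_trace_mul_eq_ite
    (hQ : ∀ j k, (Q j * Q k).trace = if j = k then c else 0) (hc : c ≠ 0)
    (hcard : Fintype.card ι = Fintype.card n ^ 2) (X : Matrix n n K) :
    (X * X).trace = ∑ j, (Q j * X).trace ^ 2 / c := by
  conv_lhs => enter [1, 1]; rw [eq_sum_trace_mul_smul_of_trace_mul_eq_ite hQ hc hcard X]
  simp [Finset.sum_mul, trace_sum, trace_smul, sq, div_mul_eq_mul_div]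

end TraceOrthogonal

end Matrix

theorem exists_eq_pi_single_of_sum_eq_one_of_sum_sq_eq_one {ι : Type*} [Fintype ι]
    [DecidableEq ι] {v : ι → ℝ} (hv : 0 ≤ v) (hsum : ∑ i, v i = 1)
    (hsq : ∑ i, v i ^ 2 = 1) : ∃ i, v = Pi.single i 1 := by
  have hle : ∀ i, v i ≤ 1 := fun i =>
    hsum ▸ Finset.single_le_sum (fun j _ => hv j) (Finset.mem_univ i)
  have hzero : ∑ i, v i * (1 - v i) = 0 := by
    simp [mul_sub, Finset.sum_sub_distrib, hsum, ← sq, hsq]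
  have hbool : ∀ i, v i = 0 ∨ v i = 1 := fun i => by
    have := (Finset.sum_eq_zero_iff_of_nonneg fun j _ =>
      mul_nonneg (hv j) (sub_nonneg.2 (hle j))).1 hzero i (Finset.mem_univ i)
    rcases mul_eq_zero.1 this with h | h
    · exact .inl h
    · exact .inr (by linarith)
  obtain ⟨i, hi⟩ : ∃ i, v i = 1 := by
    by_contra! h
    simp [fun i => (hbool i).resolve_right (h i)] at hsum
  have hrest : ∑ j ∈ Finset.univ.erase i, v j = 0 := by
    linarith [Finset.add_sum_erase Finset.univ v (Finset.mem_univ i)]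
  refine ⟨i, funext fun j => ?_⟩
  rcases eq_or_ne j i with rfl | hj
  · simp [hi]
  · simpa [hj] using (Finset.sum_eq_zero_iff_of_nonneg fun k _ => hv k).1 hrest j (by simp [hj])

theorem exists_conj_eq_of_trace_mul_conj_re_nonneg {d : ℕ} (hd : d ≠ 0)
    {Q : Fin (d ^ 2) → Matrix (Fin d) (Fin d) ℂ}
    (hherm : ∀ j, (Q j).IsHermitian) (htr : ∀ j, (Q j).trace = 1)
    (hpair : ∀ j k, (Q j * Q k).trace = if j = k then (d : ℂ) else 0)
    (hsum : ∑ j, Q j = (d : ℂ) • (1 : Matrix (Fin d) (Fin d) ℂ))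
    {U : Matrix (Fin d) (Fin d) ℂ} (hU : Uᴴ * U = 1) {k : Fin (d ^ 2)}
    (hpos : ∀ j, 0 ≤ ((Q j * (U * Q k * Uᴴ)).trace).re) :
    ∃ l, U * Q k * Uᴴ = Q l := by
  have hdC : (d : ℂ) ≠ 0 := Nat.cast_ne_zero.2 hd
  have hcard : Fintype.card (Fin (d ^ 2)) = Fintype.card (Fin d) ^ 2 := by simp
  set R := U * Q k * Uᴴ
  let v : Fin (d ^ 2) → ℝ := fun j => (Q j * R).trace.re / d
  have hv : ∀ j, (v j : ℂ) = (Q j * R).trace / d := fun j => by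
    rw [Complex.ofReal_div, Complex.ofReal_natCast,
      (hherm j).ofReal_re_trace_mul (isHermitian_mul_mul_conjTranspose U (hherm k))]
  have hv_sum : ∑ j, v j = 1 := by
    have : ∑ j, (Q j * R).trace = d := by
      rw [← trace_sum, ← Finset.sum_mul, hsum, smul_mul_assoc, Matrix.one_mul, trace_smul,
        trace_mul_cycle, hU, Matrix.one_mul, htr, smul_eq_mul, mul_one]
    exact_mod_cast show ∑ j, (v j : ℂ) = 1 by simp [hv, ← Finset.sum_div, this, hdC]
  have hv_sq : ∑ j, v j ^ 2 = 1 := by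
    have := trace_mul_self_eq_sum_sq_of_trace_mul_eq_ite hpair hdC hcard R
    rw [trace_conj_mul_conj hU, hpair, if_pos rfl] at this
    exact_mod_cast show ∑ j, (v j : ℂ) ^ 2 = 1 by
      simp only [hv, div_pow, sq (d : ℂ), ← div_div, ← Finset.sum_div, ← this, div_self hdC]
  obtain ⟨l, hl⟩ : ∃ l, v = Pi.single l 1 :=
    exists_eq_pi_single_of_sum_eq_one_of_sum_sq_eq_one
      (fun j => div_nonneg (hpos j) d.cast_nonneg) hv_sum hv_sq
  refine ⟨l, ?_⟩
  rw [eq_sum_trace_mul_smul_of_trace_mul_eq_ite hpair hdC hcard R]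
  simp_rw [← hv, hl]
  simp [Pi.single_apply]

theorem stmt_16_general (d : ℕ) (hd : 2 ≤ d)
    (Q : Fin (d ^ 2) → Matrix (Fin d) (Fin d) ℂ)
    (hherm : ∀ j, (Q j).IsHermitian)
    (htr : ∀ j, (Q j).trace = 1)
    (hpair : ∀ j k, (Q j * Q k).trace = if j = k then (d : ℂ) else 0)
    (hsum : ∑ j, Q j = (d : ℂ) • (1 : Matrix (Fin d) (Fin d) ℂ))
    (U : Matrix (Fin d) (Fin d) ℂ) (hU' : Uᴴ * U = 1) :
    (∀ j k, 0 ≤ ((Q j * (U * Q k * Uᴴ)).trace).re) ↔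
      ∃ σ : Equiv.Perm (Fin (d ^ 2)), ∀ j, U * Q j * Uᴴ = Q (σ j) := by
  constructor
  · intro hpos
    choose σ hσ using fun k => exists_conj_eq_of_trace_mul_conj_re_nonneg (by omega) hherm htr
      hpair hsum hU' (hpos · k)
    have hσ_inj : Function.Injective σ := fun k k' hkk' => by
      have := trace_conj_mul_conj hU' (Q k) (Q k')
      rw [hσ, hσ, hkk', hpair, hpair, if_pos rfl] at this
      by_contra hne
      rw [if_neg hne] at this
      exact (Nat.cast_ne_zero.2 (by omega : d ≠ 0)) this
    exact ⟨Equiv.ofBijective σ (Finite.injective_iff_bijective.1 hσ_inj), hσ⟩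
  · rintro ⟨σ, hσ⟩ j k
    rw [hσ, hpair]
    split_ifs <;> simp

/-- Theorem 5: For an NQPR `Q` in dimension `d ≥ 2` and a `d×d` unitary `U`, the
representation of `U` is entrywise nonnegative, i.e. `Re tr(Q j · U Q k U†) ≥ 0` for all `j, k`,
iff `U` belongs to the symmetry group of `Q`, i.e. there is a permutation `σ` of the indices
with `U Q j U† = Q (σ j)` for all `j`. -/
theorem stmt_16 (d : ℕ) (hd : 2 ≤ d)
    (Q : Fin (d ^ 2) → Matrix (Fin d) (Fin d) ℂ)
    (hherm : ∀ j, (Q j).IsHermitian)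
    (htr : ∀ j, (Q j).trace = 1)
    (hpair : ∀ j k, (Q j * Q k).trace = if j = k then (d : ℂ) else 0)
    (hsum : ∑ j, Q j = (d : ℂ) • (1 : Matrix (Fin d) (Fin d) ℂ))
    (U : Matrix (Fin d) (Fin d) ℂ) (hU : U * Uᴴ = 1) (hU' : Uᴴ * U = 1) :
    (∀ j k, 0 ≤ ((Q j * (U * Q k * Uᴴ)).trace).re) ↔
      ∃ σ : Equiv.Perm (Fin (d ^ 2)), ∀ j, U * Q j * Uᴴ = Q (σ j) :=
  stmt_16_general d hd Q hherm htr hpair hsum U hU'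
end

section
/- Let Π_1, …, Π_{d²} be a SIC in dimension d ≥ 2. Define Q_j⁻ = √(d+1)·Π_j + ((1 − √(d+1))/d)·I and Q_j⁺ = −√(d+1)·Π_j + ((1 + √(d+1))/d)·I. Then both families {Q_j⁻} and {Q_j⁺} are NQPRs in dimension d; moreover, the minimal eigenvalue of every Q_j⁻ equals (1 − √(d+1))/d (so the negativity of {Q_j⁻} is (√(d+1) − 1)/d), and the minimal eigenvalue of every Q_j⁺ equals (1 − (d−1)√(d+1))/d (so the negativity of {Q_j⁺} is ((d−1)√(d+1) − 1)/d). -/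
/-! For every real `a` with `a² = d + 1` the family `Q_j = a Π_j + ((1 - a) / d) I` is an NQPR,
and `a = ±√(d + 1)` gives `Q⁻` and `Q⁺`. The constant term makes `tr Q_j = 1`;
`tr (Q_j Q_k) = a² tr (Π_j Π_k) + (1 - a²) / d` equals `d δ_jk` exactly when `a² = d + 1`; and
`∑ Π_j = d I` because `T = ∑ Π_j - d I` is Hermitian with `tr (T Π_k) = tr T = 0`, so `tr (T²) = 0`.
As `Π_j` is a projector of trace one, `Q_j` has the eigenvalue `(1 - a) / d` with multiplicity
`d - 1 ≥ 1` and the eigenvalue `a + (1 - a) / d` once; the smaller one is its minimal eigenvalue. -/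

/-- The frame element `Q_j⁻ = √(d+1)·Π_j + ((1 − √(d+1))/d)·I` constructed from a SIC. -/
noncomputable def Qminus (d : ℕ) (P : Fin (d ^ 2) → Matrix (Fin d) (Fin d) ℂ)
    (j : Fin (d ^ 2)) : Matrix (Fin d) (Fin d) ℂ :=
  (Real.sqrt (d + 1) : ℂ) • P j +
    (((1 - Real.sqrt (d + 1)) / d : ℝ) : ℂ) • (1 : Matrix (Fin d) (Fin d) ℂ)

/-- The frame element `Q_j⁺ = −√(d+1)·Π_j + ((1 + √(d+1))/d)·I` constructed from a SIC. -/
noncomputable def Qplus (d : ℕ) (P : Fin (d ^ 2) → Matrix (Fin d) (Fin d) ℂ)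
    (j : Fin (d ^ 2)) : Matrix (Fin d) (Fin d) ℂ :=
  -((Real.sqrt (d + 1) : ℂ)) • P j +
    (((1 + Real.sqrt (d + 1)) / d : ℝ) : ℂ) • (1 : Matrix (Fin d) (Fin d) ℂ)

open Matrix

lemma ciInf_eq_min_of_forall_eq_or_eq {ι : Type*} [Finite ι] {e : ι → ℝ} {x y : ℝ}
    (h : ∀ i, e i = x ∨ e i = y) (hx : ∃ i, e i = x) (hy : ∃ i, e i = y) :
    ⨅ i, e i = min x y := by
  have : Nonempty ι := hx.nonempty
  refine IsLeast.isGLB ⟨?_, ?_⟩ |>.ciInf_eq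
  · rcases min_choice x y with h' | h' <;> rw [h'] <;> assumption
  · rintro _ ⟨i, rfl⟩
    rcases h i with h' | h' <;> simp [h']

lemma exists_eq_of_forall_eq_or_eq {ι : Type*} [Fintype ι] {e : ι → ℝ} {x y : ℝ}
    (h : ∀ i, e i = x ∨ e i = y) (hsum : ∑ i, e i ≠ Fintype.card ι * y) : ∃ i, e i = x := by
  by_contra! hne
  refine hsum ?_
  rw [Finset.sum_congr rfl fun i _ => (h i).resolve_left (hne i)]
  simp

section

variable {𝕜 : Type*} [RCLike 𝕜] {n : Type*} [Fintype n] [DecidableEq n]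

omit [Fintype n] in
lemma Matrix.IsHermitian.smul_add_smul_one {A : Matrix n n 𝕜} (hA : A.IsHermitian) (a b : ℝ) :
    ((a : 𝕜) • A + (b : 𝕜) • 1).IsHermitian :=
  (hA.smul (RCLike.conj_ofReal a)).add (isHermitian_one.smul (RCLike.conj_ofReal b))

lemma Matrix.IsHermitian.eigenvalues_eq_or_eq_of_mul_eq_zero {A : Matrix n n 𝕜}
    (hA : A.IsHermitian) {x y : ℝ} (h : (A - (x : 𝕜) • 1) * (A - (y : 𝕜) • 1) = 0) (i : n) :
    hA.eigenvalues i = x ∨ hA.eigenvalues i = y := by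
  set v : n → 𝕜 := WithLp.ofLp (hA.eigenvectorBasis i)
  have hv : v ≠ 0 := (WithLp.ofLp_eq_zero 2).ne.2 <| hA.eigenvectorBasis.orthonormal.ne_zero i
  have hAv : A *ᵥ v = (hA.eigenvalues i : 𝕜) • v := by
    rw [hA.mulVec_eigenvectorBasis i, RCLike.real_smul_eq_coe_smul (K := 𝕜)]
  have hsub (z : ℝ) : (A - (z : 𝕜) • 1) *ᵥ v = ((hA.eigenvalues i : 𝕜) - z) • v := by
    rw [sub_mulVec, hAv, smul_mulVec, one_mulVec, sub_smul]
  have key : (((hA.eigenvalues i : 𝕜) - x) * ((hA.eigenvalues i : 𝕜) - y)) • v = 0 := by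
    rw [← zero_mulVec v, ← h, ← mulVec_mulVec, hsub, mulVec_smul, hsub, smul_smul, mul_comm]
  simpa [sub_eq_zero, hv] using key

lemma Matrix.trace_smul_add_smul_one_mul (A B : Matrix n n 𝕜) (a b : 𝕜) :
    ((a • A + b • 1) * (a • B + b • 1)).trace
      = a ^ 2 * (A * B).trace + a * b * (A.trace + B.trace) + b ^ 2 * Fintype.card n := by
  simp only [add_mul, mul_add, smul_mul_smul_comm, mul_one, one_mul, trace_add, trace_smul,
    trace_one, smul_eq_mul]
  ring

lemma Matrix.smul_add_smul_one_sub_mul_sub_eq_zero {P : Matrix n n 𝕜} (hP : P * P = P)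
    (a b : ℝ) :
    ((a : 𝕜) • P + (b : 𝕜) • 1 - ((b + a : ℝ) : 𝕜) • 1) *
      ((a : 𝕜) • P + (b : 𝕜) • 1 - (b : 𝕜) • 1) = 0 := by
  rw [show (a : 𝕜) • P + (b : 𝕜) • 1 - ((b + a : ℝ) : 𝕜) • 1 = (a : 𝕜) • (P - 1) by
      push_cast; module, add_sub_cancel_right, smul_mul_smul_comm, sub_mul, hP, one_mul,
    sub_self, smul_zero]

lemma Matrix.IsHermitian.iInf_eigenvalues_smul_add_smul_one {P Q : Matrix n n 𝕜}
    (hP : P * P = P) (htr : P.trace = 1) (hn : 2 ≤ Fintype.card n) {a b : ℝ} (ha : a ≠ 0)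
    (hQP : Q = (a : 𝕜) • P + (b : 𝕜) • 1) (hQ : Q.IsHermitian) :
    ⨅ i, hQ.eigenvalues i = min (b + a) b := by
  subst hQP
  have heig :=
    hQ.eigenvalues_eq_or_eq_of_mul_eq_zero (smul_add_smul_one_sub_mul_sub_eq_zero hP a b)
  have hsum : ∑ i, hQ.eigenvalues i = a + Fintype.card n * b := by
    have := hQ.trace_eq_sum_eigenvalues
    rw [trace_add, trace_smul, trace_smul, htr, trace_one, smul_eq_mul, smul_eq_mul] at this
    apply RCLike.ofReal_injective (K := 𝕜)
    push_cast
    rw [← this]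
    ring
  have hn' : (2 : ℝ) ≤ Fintype.card n := by exact_mod_cast hn
  refine ciInf_eq_min_of_forall_eq_or_eq heig (exists_eq_of_forall_eq_or_eq heig ?_)
    (exists_eq_of_forall_eq_or_eq (fun i => (heig i).symm) ?_)
  · rw [hsum]
    intro h
    exact ha (by linarith)
  · rw [hsum]
    intro h
    have : ((Fintype.card n : ℝ) - 1) * a = 0 := by linarith
    exact ha ((mul_eq_zero.1 this).resolve_left (by linarith))

end

structure IsSIC (d : ℕ) (P : Fin (d ^ 2) → Matrix (Fin d) (Fin d) ℂ) : Prop where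
  isHermitian : ∀ j, (P j).IsHermitian
  mul_self : ∀ j, P j * P j = P j
  trace_eq_one : ∀ j, (P j).trace = 1
  trace_mul : ∀ j k, (P j * P k).trace =
    ((d : ℂ) * (if j = k then 1 else 0) + 1) / ((d : ℂ) + 1)

structure IsNQPR (d : ℕ) (Q : Fin (d ^ 2) → Matrix (Fin d) (Fin d) ℂ) : Prop where
  isHermitian : ∀ j, (Q j).IsHermitian
  trace_eq_one : ∀ j, (Q j).trace = 1
  trace_mul : ∀ j k, (Q j * Q k).trace = if j = k then (d : ℂ) else 0
  sum_eq : ∑ j, Q j = (d : ℂ) • (1 : Matrix (Fin d) (Fin d) ℂ)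

noncomputable def sicAffine (d : ℕ) (P : Fin (d ^ 2) → Matrix (Fin d) (Fin d) ℂ) (a : ℝ)
    (j : Fin (d ^ 2)) : Matrix (Fin d) (Fin d) ℂ :=
  (a : ℂ) • P j + (((1 - a) / d : ℝ) : ℂ) • 1

namespace IsSIC

variable {d : ℕ} {P : Fin (d ^ 2) → Matrix (Fin d) (Fin d) ℂ}

lemma trace_sum_mul (hP : IsSIC d P) (k : Fin (d ^ 2)) : ((∑ j, P j) * P k).trace = d := by
  have hd1 : (d : ℂ) + 1 ≠ 0 := by exact_mod_cast d.succ_ne_zero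
  simp only [Finset.sum_mul, trace_sum, hP.trace_mul, ← Finset.sum_div, Finset.sum_add_distrib,
    mul_ite, mul_one, mul_zero, Finset.sum_ite_eq', Finset.mem_univ, if_true, Finset.sum_const,
    Finset.card_univ, Fintype.card_fin, nsmul_eq_mul]
  field_simp
  push_cast
  ring

open scoped ComplexOrder in
theorem sum_eq (hP : IsSIC d P) : ∑ j, P j = (d : ℂ) • (1 : Matrix (Fin d) (Fin d) ℂ) := by
  set T := ∑ j, P j - (d : ℂ) • (1 : Matrix (Fin d) (Fin d) ℂ)
  have hT : T.IsHermitian :=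
    (isSelfAdjoint_sum _ fun j _ => hP.isHermitian j).sub (isHermitian_one.smul (by simp))
  have hTP (k : Fin (d ^ 2)) : (T * P k).trace = 0 := by
    simp [T, sub_mul, hP.trace_sum_mul, hP.trace_eq_one]
  have hTT : (Tᴴ * T).trace = 0 := by
    calc (Tᴴ * T).trace = ∑ k, (T * P k).trace - d * T.trace := by
          simp [hT.eq, T, mul_sub, Finset.mul_sum, trace_sum]
      _ = 0 := by simp [hTP, T, trace_sum, hP.trace_eq_one, sq]
  exact sub_eq_zero.1 (trace_conjTranspose_mul_self_eq_zero_iff.1 hTT)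

theorem isNQPR_sicAffine (hP : IsSIC d P) (hd : d ≠ 0) {a : ℝ} (ha : a ^ 2 = d + 1) :
    IsNQPR d (sicAffine d P a) where
  isHermitian j := (hP.isHermitian j).smul_add_smul_one _ _
  trace_eq_one j := by
    simp only [sicAffine, trace_add, trace_smul, hP.trace_eq_one, trace_one, Fintype.card_fin,
      smul_eq_mul]
    push_cast
    field_simp
    ring
  trace_mul j k := by
    have hd1 : (d : ℂ) + 1 ≠ 0 := by exact_mod_cast d.succ_ne_zero
    have ha' : (a : ℂ) ^ 2 = d + 1 := by exact_mod_cast ha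
    rw [sicAffine, sicAffine, trace_smul_add_smul_one_mul, hP.trace_mul, hP.trace_eq_one,
      hP.trace_eq_one, Fintype.card_fin]
    push_cast
    field_simp
    split_ifs
    · linear_combination ((d : ℂ) ^ 2 - 1) * ha'
    · linear_combination -ha'
  sum_eq := by
    simp only [sicAffine, Finset.sum_add_distrib, ← Finset.smul_sum, hP.sum_eq, Finset.sum_const,
      Finset.card_univ, Fintype.card_fin, smul_smul, ← Nat.cast_smul_eq_nsmul ℂ, ← add_smul]
    congr 1
    push_cast
    field_simp
    ring

end IsSIC

lemma Qplus_eq_sicAffine (d : ℕ) (P : Fin (d ^ 2) → Matrix (Fin d) (Fin d) ℂ) :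
    Qplus d P = sicAffine d P (-√(d + 1)) := by
  funext j
  simp [Qplus, sicAffine, sub_neg_eq_add]

/-- Given a SIC `Π` in dimension `d ≥ 2`, the families `{Q_j⁻}` and `{Q_j⁺}`
are NQPRs; the minimal eigenvalue of every `Q_j⁻` equals `(1 − √(d+1))/d` (negativity
`(√(d+1) − 1)/d`), and the minimal eigenvalue of every `Q_j⁺` equals `(1 − (d−1)√(d+1))/d`
(negativity `((d−1)√(d+1) − 1)/d`). -/
theorem stmt_18 (d : ℕ) (hd : 2 ≤ d)
    (P : Fin (d ^ 2) → Matrix (Fin d) (Fin d) ℂ)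
    (hherm : ∀ j, (P j).IsHermitian)
    (hproj : ∀ j, P j * P j = P j)
    (htr : ∀ j, (P j).trace = 1)
    (hpair : ∀ j k, (P j * P k).trace =
      ((d : ℂ) * (if j = k then 1 else 0) + 1) / ((d : ℂ) + 1)) :
    (∀ j, (Qminus d P j).IsHermitian) ∧
    (∀ j, (Qminus d P j).trace = 1) ∧
    (∀ j k, (Qminus d P j * Qminus d P k).trace = if j = k then (d : ℂ) else 0) ∧
    (∑ j, Qminus d P j = (d : ℂ) • (1 : Matrix (Fin d) (Fin d) ℂ)) ∧
    (∀ j, (Qplus d P j).IsHermitian) ∧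
    (∀ j, (Qplus d P j).trace = 1) ∧
    (∀ j k, (Qplus d P j * Qplus d P k).trace = if j = k then (d : ℂ) else 0) ∧
    (∑ j, Qplus d P j = (d : ℂ) • (1 : Matrix (Fin d) (Fin d) ℂ)) ∧
    (∀ j, ∀ h : (Qminus d P j).IsHermitian,
      (⨅ i, h.eigenvalues i) = (1 - Real.sqrt (d + 1)) / d) ∧
    (∀ j, ∀ h : (Qplus d P j).IsHermitian,
      (⨅ i, h.eigenvalues i) = (1 - ((d : ℝ) - 1) * Real.sqrt (d + 1)) / d) := by
  have hP : IsSIC d P := ⟨hherm, hproj, htr, hpair⟩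
  have hd0 : d ≠ 0 := by omega
  have hcard : 2 ≤ Fintype.card (Fin d) := by simpa using hd
  have hs : 0 < √(d + 1 : ℝ) := by positivity
  have hs2 : √(d + 1 : ℝ) ^ 2 = d + 1 := Real.sq_sqrt (by positivity)
  obtain ⟨hmH, hmtr, hmpair, hmsum⟩ : IsNQPR d (Qminus d P) := hP.isNQPR_sicAffine hd0 hs2
  obtain ⟨hpH, hptr, hppair, hpsum⟩ : IsNQPR d (Qplus d P) :=
    Qplus_eq_sicAffine d P ▸ hP.isNQPR_sicAffine hd0 (by rwa [neg_sq])
  refine ⟨hmH, hmtr, hmpair, hmsum, hpH, hptr, hppair, hpsum, fun j h => ?_, fun j h => ?_⟩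
  · exact (h.iInf_eigenvalues_smul_add_smul_one (hproj j) (htr j) hcard hs.ne' rfl).trans
      (min_eq_right (by linarith))
  · rw [h.iInf_eigenvalues_smul_add_smul_one (hproj j) (htr j) hcard (neg_ne_zero.2 hs.ne')
      (b := (1 + √(d + 1)) / d) (by simp [Qplus]), min_eq_left (by linarith)]
    field_simp
    ring
end
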